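/- arXiv:2408.00598 — 9 statements merged into one kernel-verified Lean document; each statement's English description precedes it below -/
import Mathlib

section
/- Let m, n be positive integers and let (f⁽¹⁾, f⁽²⁾) be a feasible point of the reduced OT problem, i.e., f⁽¹⁾_{i,k,j} ≥ 0, f⁽²⁾_{k,j,l} ≥ 0, and ∑_{i=1}^m f⁽¹⁾_{i,k,j} = ∑_{l=1}^n f⁽²⁾_{k,j,l} for all (k,j). For each fixed pair (k,j), define π_{i,j;k,l} recursively (in the order i = 1,…,m outer, l = 1,…,n inner) by π_{i,j;k,l} = min( f⁽¹⁾_{i,k,j} − ∑_{l'<l} π_{i,j;k,l'}, f⁽²⁾_{k,j,l} − ∑_{i'<i} π_{i',j;k,l} ). Then π_{i,j;k,l} ≥ 0 for all indices, ∑_{l=1}^n π_{i,j;k,l} = f⁽¹⁾_{i,k,j} for all i, k, j, and ∑_{i=1}^m π_{i,j;k,l} = f⁽²⁾_{k,j,l} for all k, j, l. -/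
open Finset

/-- Northwest-corner rule correctness for a single transportation problem. -/
lemma nw_corner (m n : ℕ) (hm : 0 < m) (hn : 0 < n)
    (g1 : Fin m → ℝ) (g2 : Fin n → ℝ)
    (hg1 : ∀ i, 0 ≤ g1 i) (hg2 : ∀ l, 0 ≤ g2 l)
    (hbal : ∑ i, g1 i = ∑ l, g2 l)
    (a : Fin m → Fin n → ℝ)
    (ha : ∀ i l, a i l =
      min (g1 i - ∑ l' ∈ Finset.Iio l, a i l')
          (g2 l - ∑ i' ∈ Finset.Iio i, a i' l)) :
    (∀ i l, 0 ≤ a i l) ∧ (∀ i, ∑ l, a i l = g1 i) ∧ (∀ l, ∑ i, a i l = g2 l) := by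
  obtain ⟨m, rfl⟩ : ∃ m', m = m' + 1 := ⟨m - 1, by omega⟩
  obtain ⟨n, rfl⟩ : ∃ n', n = n' + 1 := ⟨n - 1, by omega⟩
  -- partial row sums through `l` are at most `g1 i`
  have Q1 : ∀ i l, ∑ l' ∈ Iic l, a i l' ≤ g1 i := by
    intro i l
    rw [← Finset.Iio_insert, Finset.sum_insert (by simp)]
    have h := ha i l
    have : a i l ≤ g1 i - ∑ l' ∈ Iio l, a i l' := h ▸ min_le_left _ _
    linarith
  have Q2 : ∀ i l, ∑ i' ∈ Iic i, a i' l ≤ g2 l := by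
    intro i l
    rw [← Finset.Iio_insert, Finset.sum_insert (by simp)]
    have h := ha i l
    have : a i l ≤ g2 l - ∑ i' ∈ Iio i, a i' l := h ▸ min_le_right _ _
    linarith
  have P1 : ∀ i l, ∑ l' ∈ Iio l, a i l' ≤ g1 i := by
    intro i l
    rcases Fin.eq_zero_or_eq_succ l with rfl | ⟨l', rfl⟩
    · have : Iio (0 : Fin (n + 1)) = ∅ := by
        ext x; simp [Fin.not_lt_zero]
      simp [this, hg1 i]
    · have : Iio l'.succ = Iic l'.castSucc := by
        ext x
        simp only [mem_Iio, mem_Iic, Fin.lt_iff_val_lt_val, Fin.le_iff_val_le_val,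
          Fin.val_succ, Fin.coe_castSucc]
        omega
      rw [this]; exact Q1 i _
  have P2 : ∀ i l, ∑ i' ∈ Iio i, a i' l ≤ g2 l := by
    intro i l
    rcases Fin.eq_zero_or_eq_succ i with rfl | ⟨i', rfl⟩
    · have : Iio (0 : Fin (m + 1)) = ∅ := by
        ext x; simp [Fin.not_lt_zero]
      simp [this, hg2 l]
    · have : Iio i'.succ = Iic i'.castSucc := by
        ext x
        simp only [mem_Iio, mem_Iic, Fin.lt_iff_val_lt_val, Fin.le_iff_val_le_val,
          Fin.val_succ, Fin.coe_castSucc]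
        omega
      rw [this]; exact Q2 _ l
  have N : ∀ i l, 0 ≤ a i l := by
    intro i l
    rw [ha]
    exact le_min (by linarith [P1 i l]) (by linarith [P2 i l])
  have hIicLastN : Iic (Fin.last n) = (univ : Finset (Fin (n + 1))) := by
    ext x; simp [Fin.le_last]
  have hIicLastM : Iic (Fin.last m) = (univ : Finset (Fin (m + 1))) := by
    ext x; simp [Fin.le_last]
  have rowB : ∀ i, ∑ l, a i l ≤ g1 i := by
    intro i; rw [← hIicLastN]; exact Q1 i _
  have colB : ∀ l, ∑ i, a i l ≤ g2 l := by
    intro l; rw [← hIicLastM]; exact Q2 _ l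
  have R : ∀ i, ∑ l, a i l = g1 i := by
    by_contra hcon
    push_neg at hcon
    obtain ⟨i0, hi0⟩ := hcon
    have hlt : ∑ l, a i0 l < g1 i0 := lt_of_le_of_ne (rowB i0) hi0
    have hcol : ∀ l, ∑ i' ∈ Iic i0, a i' l = g2 l := by
      intro l
      have h1 : ∑ l' ∈ Iic l, a i0 l' ≤ ∑ l', a i0 l' :=
        Finset.sum_le_sum_of_subset_of_nonneg (subset_univ _) (fun x _ _ => N i0 x)
      have h2 : ∑ l' ∈ Iic l, a i0 l' = a i0 l + ∑ l' ∈ Iio l, a i0 l' := by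
        rw [← Finset.Iio_insert, Finset.sum_insert (by simp)]
      have h3 : a i0 l < g1 i0 - ∑ l' ∈ Iio l, a i0 l' := by linarith
      have h4 : a i0 l = g2 l - ∑ i' ∈ Iio i0, a i' l := by
        have hmin := ha i0 l
        rcases min_cases (g1 i0 - ∑ l' ∈ Iio l, a i0 l')
            (g2 l - ∑ i' ∈ Iio i0, a i' l) with ⟨h, _⟩ | ⟨h, _⟩
        · exact absurd (hmin.trans h) (ne_of_lt h3)
        · exact hmin.trans h
      rw [← Finset.Iio_insert, Finset.sum_insert (by simp)]
      linarith
    have hsum : ∑ i' ∈ Iic i0, ∑ l, a i' l = ∑ l, g2 l := by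
      rw [Finset.sum_comm]
      exact Finset.sum_congr rfl fun l _ => hcol l
    have hle : ∑ i' ∈ Iic i0, ∑ l, a i' l < ∑ i' ∈ Iic i0, g1 i' :=
      Finset.sum_lt_sum (fun i' _ => rowB i') ⟨i0, mem_Iic.2 le_rfl, hlt⟩
    have hle2 : ∑ i' ∈ Iic i0, g1 i' ≤ ∑ i', g1 i' :=
      Finset.sum_le_sum_of_subset_of_nonneg (subset_univ _) (fun x _ _ => hg1 x)
    linarith
  have C : ∀ l, ∑ i, a i l = g2 l := by
    have htot : ∑ l, ∑ i, a i l = ∑ l, g2 l := by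
      rw [Finset.sum_comm]
      calc ∑ i, ∑ l, a i l = ∑ i, g1 i := Finset.sum_congr rfl fun i _ => R i
        _ = ∑ l, g2 l := hbal
    intro l
    exact (Finset.sum_eq_sum_iff_of_le (fun l _ => colB l)).1 htot l (mem_univ l)
  exact ⟨N, R, C⟩

/-- Algorithm 1 produces exact partial marginals.
For a feasible point `(f¹, f²)` of the reduced OT problem (nonnegative flows with
`∑_i f¹ i k j = ∑_l f² k j l` for all `(k,j)`), the array `π` defined for each fixed
`(k,j)` by the greedy recursion
`π i j k l = min (f¹ i k j - ∑_{l' < l} π i j k l') (f² k j l - ∑_{i' < i} π i' j k l)`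
is nonnegative, with `∑_l π i j k l = f¹ i k j` and `∑_i π i j k l = f² k j l`. -/
theorem stmt1 (m n : ℕ) (hm : 0 < m) (hn : 0 < n)
    (f1 : Fin m → Fin m → Fin n → ℝ) (f2 : Fin m → Fin n → Fin n → ℝ)
    (hf1 : ∀ i k j, 0 ≤ f1 i k j) (hf2 : ∀ k j l, 0 ≤ f2 k j l)
    (hbal : ∀ k j, ∑ i, f1 i k j = ∑ l, f2 k j l)
    (π : Fin m → Fin n → Fin m → Fin n → ℝ)
    (hπ : ∀ i j k l, π i j k l =
      min (f1 i k j - ∑ l' ∈ Finset.Iio l, π i j k l')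
          (f2 k j l - ∑ i' ∈ Finset.Iio i, π i' j k l)) :
    (∀ i j k l, 0 ≤ π i j k l) ∧
    (∀ i k j, ∑ l, π i j k l = f1 i k j) ∧
    (∀ k j l, ∑ i, π i j k l = f2 k j l) := by
  have key : ∀ k j, (∀ i l, 0 ≤ π i j k l) ∧ (∀ i, ∑ l, π i j k l = f1 i k j) ∧
      (∀ l, ∑ i, π i j k l = f2 k j l) := fun k j =>
    nw_corner m n hm hn (fun i => f1 i k j) (fun l => f2 k j l)
      (fun i => hf1 i k j) (fun l => hf2 k j l) (hbal k j)
      (fun i l => π i j k l) (fun i l => hπ i j k l)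
  exact ⟨fun i j k l => (key k j).1 i l, fun i k j => (key k j).2.1 i,
    fun k j l => (key k j).2.2 l⟩
end

section
/- Let m, n be positive integers, let μ¹, μ² be nonnegative functions on I = {1,…,m}×{1,…,n}, and let (f⁽¹⁾, f⁽²⁾) satisfy all constraints of the reduced OT problem with marginals μ¹, μ². Suppose π is a nonnegative array satisfying ∑_{l=1}^n π_{i,j;k,l} = f⁽¹⁾_{i,k,j} for all i, k, j and ∑_{i=1}^m π_{i,j;k,l} = f⁽²⁾_{k,j,l} for all k, j, l. Then π is feasible for the original OT problem: ∑_{(k,l)∈I} π_{i,j;k,l} = μ¹_{i,j} for all (i,j) ∈ I and ∑_{(i,j)∈I} π_{i,j;k,l} = μ²_{k,l} for all (k,l) ∈ I. -/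
open Finset

/-- feasibility transfer.
If `(f¹, f²)` satisfies all constraints of the reduced OT problem with marginals
`μ¹, μ²`, and `π ≥ 0` has partial marginals `∑_l π i j k l = f¹ i k j` and
`∑_i π i j k l = f² k j l`, then `π` is feasible for the original OT problem. -/
theorem stmt2 (m n : ℕ) (hm : 0 < m) (hn : 0 < n)
    (μ1 μ2 : Fin m → Fin n → ℝ)
    (hμ1 : ∀ i j, 0 ≤ μ1 i j) (hμ2 : ∀ k l, 0 ≤ μ2 k l)
    (f1 : Fin m → Fin m → Fin n → ℝ) (f2 : Fin m → Fin n → Fin n → ℝ)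
    (hf1 : ∀ i k j, 0 ≤ f1 i k j) (hf2 : ∀ k j l, 0 ≤ f2 k j l)
    (hbal : ∀ k j, ∑ i, f1 i k j = ∑ l, f2 k j l)
    (hmarg1 : ∀ i j, ∑ k, f1 i k j = μ1 i j)
    (hmarg2 : ∀ k l, ∑ j, f2 k j l = μ2 k l)
    (π : Fin m → Fin n → Fin m → Fin n → ℝ)
    (hπpos : ∀ i j k l, 0 ≤ π i j k l)
    (hπ1 : ∀ i k j, ∑ l, π i j k l = f1 i k j)
    (hπ2 : ∀ k j l, ∑ i, π i j k l = f2 k j l) :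
    (∀ i j, ∑ k, ∑ l, π i j k l = μ1 i j) ∧
    (∀ k l, ∑ i, ∑ j, π i j k l = μ2 k l) := by
  constructor
  · intro i j
    simp_rw [hπ1, hmarg1]
  · intro k l
    rw [Finset.sum_comm]
    simp_rw [hπ2, hmarg2]
end

section
/- Let m, n be positive integers and let π be a real array indexed by ((i,j),(k,l)) ∈ I × I, and f⁽¹⁾, f⁽²⁾ real arrays, such that ∑_{l=1}^n π_{i,j;k,l} = f⁽¹⁾_{i,k,j} for all i, k, j and ∑_{i=1}^m π_{i,j;k,l} = f⁽²⁾_{k,j,l} for all k, j, l. Then ∑_{(i,j)∈I} ∑_{(k,l)∈I} ((i−k)² + (j−l)²) π_{i,j;k,l} = ∑_{(i,j)∈I} [ ∑_{k=1}^m (k−i)² f⁽¹⁾_{i,k,j} + ∑_{l=1}^n (j−l)² f⁽²⁾_{k,j,l} ]. -/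
open Finset

/-- cost identity.
If the partial marginals of `π` equal the flows `f¹, f²`, i.e.
`∑_l π i j k l = f¹ i k j` and `∑_i π i j k l = f² k j l`, then the transport cost of
`π` with ground cost `(i−k)² + (j−l)²` equals the objective value of `(f¹, f²)` in the
reduced OT model
`∑_{(i,j)∈I} [ ∑_k (k−i)² f¹ i k j + ∑_l (j−l)² f² i j l ]`
(in the second term the outer index plays the role of `k`). -/
theorem stmt3 (m n : ℕ) (hm : 0 < m) (hn : 0 < n)
    (π : Fin m → Fin n → Fin m → Fin n → ℝ)
    (f1 : Fin m → Fin m → Fin n → ℝ) (f2 : Fin m → Fin n → Fin n → ℝ)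
    (hπ1 : ∀ i k j, ∑ l, π i j k l = f1 i k j)
    (hπ2 : ∀ k j l, ∑ i, π i j k l = f2 k j l) :
    ∑ i : Fin m, ∑ j : Fin n, ∑ k : Fin m, ∑ l : Fin n,
        (((i : ℝ) - (k : ℝ)) ^ 2 + ((j : ℝ) - (l : ℝ)) ^ 2) * π i j k l =
      ∑ i : Fin m, ∑ j : Fin n,
        ((∑ k : Fin m, ((k : ℝ) - (i : ℝ)) ^ 2 * f1 i k j) +
         (∑ l : Fin n, ((j : ℝ) - (l : ℝ)) ^ 2 * f2 i j l)) := by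
  simp_rw [add_mul, sum_add_distrib, ← hπ1, ← hπ2, mul_sum]
  congr 1
  · apply sum_congr rfl; intro i _; apply sum_congr rfl; intro j _
    apply sum_congr rfl; intro k _; apply sum_congr rfl; intro l _
    ring
  · rw [sum_comm]; conv_rhs => rw [sum_comm]
    apply sum_congr rfl; intro j _
    rw [sum_comm]
    apply sum_congr rfl; intro k _
    rw [sum_comm]
end

section
/- Let m, n be positive integers and let μ¹, μ² be nonnegative functions on I = {1,…,m}×{1,…,n} with ∑_{(i,j)∈I} μ¹_{i,j} = ∑_{(k,l)∈I} μ²_{k,l} = 1. Suppose (f⁽¹⁾, f⁽²⁾) is an optimal solution of the reduced OT problem with marginals μ¹, μ². Define π by the greedy recursion of Algorithm 1: for each fixed (k,j), in the order i = 1,…,m outer and l = 1,…,n inner, set π_{i,j;k,l} = min( f⁽¹⁾_{i,k,j} − ∑_{l'<l} π_{i,j;k,l'}, f⁽²⁾_{k,j,l} − ∑_{i'<i} π_{i',j;k,l} ). Then π is an optimal solution of the original OT problem with cost c_{i,j;k,l} = (i−k)² + (j−l)² and marginals μ¹, μ². -/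
open Finset

noncomputable section

/-- Feasibility for the original OT problem (model (1)) with marginals `μ¹, μ²`. -/
def otFeasible (m n : ℕ) (μ1 μ2 : Fin m → Fin n → ℝ)
    (π : Fin m → Fin n → Fin m → Fin n → ℝ) : Prop :=
  (∀ i j k l, 0 ≤ π i j k l) ∧
  (∀ i j, ∑ k, ∑ l, π i j k l = μ1 i j) ∧
  (∀ k l, ∑ i, ∑ j, π i j k l = μ2 k l)

/-- Transport cost with squared Euclidean ground cost `(i−k)² + (j−l)²`. -/
def otCost (m n : ℕ) (π : Fin m → Fin n → Fin m → Fin n → ℝ) : ℝ :=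
  ∑ i : Fin m, ∑ j : Fin n, ∑ k : Fin m, ∑ l : Fin n,
    (((i : ℝ) - (k : ℝ)) ^ 2 + ((j : ℝ) - (l : ℝ)) ^ 2) * π i j k l

/-- Feasibility for the reduced OT problem (model (3)) with marginals `μ¹, μ²`. -/
def redFeasible (m n : ℕ) (μ1 μ2 : Fin m → Fin n → ℝ)
    (f1 : Fin m → Fin m → Fin n → ℝ) (f2 : Fin m → Fin n → Fin n → ℝ) : Prop :=
  (∀ i k j, 0 ≤ f1 i k j) ∧ (∀ k j l, 0 ≤ f2 k j l) ∧
  (∀ k j, ∑ i, f1 i k j = ∑ l, f2 k j l) ∧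
  (∀ i j, ∑ k, f1 i k j = μ1 i j) ∧
  (∀ k l, ∑ j, f2 k j l = μ2 k l)

/-- Objective of the reduced OT problem (model (3)). -/
def redObj (m n : ℕ) (f1 : Fin m → Fin m → Fin n → ℝ)
    (f2 : Fin m → Fin n → Fin n → ℝ) : ℝ :=
  ∑ i : Fin m, ∑ j : Fin n,
    ((∑ k : Fin m, ((k : ℝ) - (i : ℝ)) ^ 2 * f1 i k j) +
     (∑ l : Fin n, ((j : ℝ) - (l : ℝ)) ^ 2 * f2 i j l))

lemma keymin (x X y Y : ℝ) (hx : x ≤ X) (hy : y ≤ Y) :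
    min x Y + (min X y - min x y) + min ((X - x) - (min X y - min x y)) ((Y - y) - (min x Y - min x y)) = min X Y := by
  rcases le_total x y with h1 | h1 <;> rcases le_total X Y with h2 | h2 <;>
    rcases le_total X y with h3 | h3 <;> rcases le_total x Y with h4 | h4 <;>
    simp [min_def] <;> split_ifs <;> linarith

lemma minlip (x X c : ℝ) (hx : x ≤ X) : min X c - min x c ≤ X - x := by
  rcases le_total X c with h | h <;> rcases le_total x c with h' | h' <;>
    simp [min_def] <;> split_ifs <;> linarith

lemma stepsum {k : ℕ} (f : Fin k → ℝ) (s : ℕ) (hs : s < k) :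
    ∑ i ∈ Finset.univ.filter (fun i : Fin k => (i:ℕ) < s+1), f i
      = ∑ i ∈ Finset.univ.filter (fun i : Fin k => (i:ℕ) < s), f i + f ⟨s,hs⟩ := by
  rw [Finset.sum_filter, Finset.sum_filter]
  have h : ∀ i : Fin k, (if (i:ℕ) < s+1 then f i else 0)
      = (if (i:ℕ) < s then f i else 0) + (if i = ⟨s,hs⟩ then f i else 0) := by
    intro i
    by_cases h1 : (i:ℕ) < s
    · have h2 : (i:ℕ) < s + 1 := by omega
      have hne : i ≠ ⟨s,hs⟩ := by intro he; rw [he] at h1; simp at h1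
      simp [h1, h2, hne]
    · by_cases h2 : (i:ℕ) = s
      · have he : i = ⟨s,hs⟩ := Fin.ext h2
        simp [he, h1, Nat.lt_succ_iff]
      · have h3 : ¬ ((i:ℕ) < s + 1) := by omega
        have hne : i ≠ ⟨s,hs⟩ := by intro he; rw [he] at h2; simp at h2
        simp [h1, h3, hne]
  simp only [h, Finset.sum_add_distrib, Finset.sum_ite_eq']
  simp

lemma satsum {k : ℕ} (f : Fin k → ℝ) (s : ℕ) (hs : k ≤ s) :
    ∑ i ∈ Finset.univ.filter (fun i : Fin k => (i:ℕ) < s+1), f i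
      = ∑ i ∈ Finset.univ.filter (fun i : Fin k => (i:ℕ) < s), f i := by
  congr 1
  ext i
  simp only [Finset.mem_filter]
  have h2 := i.isLt
  exact ⟨fun ⟨hu,h⟩ => ⟨hu, by omega⟩, fun ⟨hu,h⟩ => ⟨hu, by omega⟩⟩

lemma fullsum {k : ℕ} (f : Fin k → ℝ) :
    ∑ i ∈ Finset.univ.filter (fun i : Fin k => (i:ℕ) < k), f i = ∑ i, f i := by
  rw [Finset.filter_true_of_mem]
  intro i _; exact i.isLt

lemma iio_eq' {k : ℕ} (t : Fin k) :
    (Finset.Iio t) = Finset.univ.filter (fun i : Fin k => (i:ℕ) < (t:ℕ)) := by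
  ext i
  simp only [Finset.mem_Iio, Finset.mem_filter, Finset.mem_univ, true_and, Fin.lt_def]

lemma nw {m n : ℕ} (a : Fin m → ℝ) (b : Fin n → ℝ)
    (ha : ∀ i, 0 ≤ a i) (hb : ∀ l, 0 ≤ b l)
    (hab : ∑ i, a i = ∑ l, b l) (p : Fin m → Fin n → ℝ)
    (hp : ∀ i l, p i l = min (a i - ∑ l' ∈ Finset.Iio l, p i l')
        (b l - ∑ i' ∈ Finset.Iio i, p i' l)) :
    (∀ i l, 0 ≤ p i l) ∧ (∀ i, ∑ l, p i l = a i) ∧ (∀ l, ∑ i, p i l = b l) := by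
  set A : ℕ → ℝ := fun s => ∑ i ∈ Finset.univ.filter (fun i : Fin m => (i:ℕ) < s), a i with hA
  set B : ℕ → ℝ := fun t => ∑ l ∈ Finset.univ.filter (fun l : Fin n => (l:ℕ) < t), b l with hB
  set S : ℕ → ℕ → ℝ := fun s t => ∑ i ∈ Finset.univ.filter (fun i : Fin m => (i:ℕ) < s),
      ∑ l ∈ Finset.univ.filter (fun l : Fin n => (l:ℕ) < t), p i l with hS
  have hAnn : ∀ s, 0 ≤ A s := fun s => Finset.sum_nonneg (fun i _ => ha i)
  have hBnn : ∀ t, 0 ≤ B t := fun t => Finset.sum_nonneg (fun l _ => hb l)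
  have hAmono : ∀ s t, s ≤ t → A s ≤ A t := by
    intro s t hst
    apply Finset.sum_le_sum_of_subset_of_nonneg
    · intro i hi; simp only [Finset.mem_filter] at hi ⊢; exact ⟨hi.1, by omega⟩
    · intro i _ _; exact ha i
  have hBmono : ∀ s t, s ≤ t → B s ≤ B t := by
    intro s t hst
    apply Finset.sum_le_sum_of_subset_of_nonneg
    · intro i hi; simp only [Finset.mem_filter] at hi ⊢; exact ⟨hi.1, by omega⟩
    · intro i _ _; exact hb i
  have hAstep : ∀ s (hs : s < m), A (s+1) = A s + a ⟨s,hs⟩ := fun s hs => stepsum a s hs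
  have hBstep : ∀ t (ht : t < n), B (t+1) = B t + b ⟨t,ht⟩ := fun t ht => stepsum b t ht
  have hS0l : ∀ t, S 0 t = 0 := by intro t; simp [hS]
  have hSs0 : ∀ s, S s 0 = 0 := by intro s; simp [hS]
  have hSstep1 : ∀ s t (hs : s < m), S (s+1) t = S s t +
      ∑ l ∈ Finset.univ.filter (fun l : Fin n => (l:ℕ) < t), p ⟨s,hs⟩ l :=
    fun s t hs => stepsum (fun i => ∑ l ∈ Finset.univ.filter (fun l : Fin n => (l:ℕ) < t), p i l) s hs
  have hSsat1 : ∀ s t, m ≤ s → S (s+1) t = S s t :=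
    fun s t hs => satsum (fun i => ∑ l ∈ Finset.univ.filter (fun l : Fin n => (l:ℕ) < t), p i l) s hs
  have hSstep2 : ∀ s t (ht : t < n), S s (t+1) = S s t +
      ∑ i ∈ Finset.univ.filter (fun i : Fin m => (i:ℕ) < s), p i ⟨t,ht⟩ := by
    intro s t ht
    simp only [hS]
    rw [← Finset.sum_add_distrib]
    exact Finset.sum_congr rfl (fun i _ => stepsum (p i) t ht)
  have hSsat2 : ∀ s t, n ≤ t → S s (t+1) = S s t := by
    intro s t ht
    exact Finset.sum_congr rfl (fun i _ => satsum (p i) t ht)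
  have hAsat : ∀ s, m ≤ s → A (s+1) = A s := fun s hs => satsum a s hs
  have hBsat : ∀ t, n ≤ t → B (t+1) = B t := fun t ht => satsum b t ht
  -- the key invariant
  have claim : ∀ s t, S s t = min (A s) (B t) := by
    have H : ∀ N s t, s + t ≤ N → S s t = min (A s) (B t) := by
      intro N
      induction N with
      | zero =>
        intro s t h
        have hs : s = 0 := by omega
        have ht : t = 0 := by omega
        subst hs; subst ht
        simp [hS, hA, hB]
      | succ N ih =>
        intro s t h
        match s, t with
        | 0, t =>
          rw [hS0l]
          have : A 0 = 0 := by simp [hA]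
          rw [this, min_eq_left (hBnn t)]
        | s+1, 0 =>
          rw [hSs0]
          have : B 0 = 0 := by simp [hB]
          rw [this, min_eq_right (hAnn (s+1))]
        | s+1, t+1 =>
          by_cases hsm : s < m
          · by_cases htn : t < n
            · -- main case
              have e1 : S s (t+1) = min (A s) (B (t+1)) := ih s (t+1) (by omega)
              have e2 : S (s+1) t = min (A (s+1)) (B t) := ih (s+1) t (by omega)
              have e3 : S s t = min (A s) (B t) := ih s t (by omega)
              have hx : A s ≤ A (s+1) := hAmono s (s+1) (by omega)
              have hy : B t ≤ B (t+1) := hBmono t (t+1) (by omega)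
              have hRow : ∑ l ∈ Finset.univ.filter (fun l : Fin n => (l:ℕ) < t), p ⟨s,hsm⟩ l
                  = min (A (s+1)) (B t) - min (A s) (B t) := by
                have := hSstep1 s t hsm; linarith
              have hCol : ∑ i ∈ Finset.univ.filter (fun i : Fin m => (i:ℕ) < s), p i ⟨t,htn⟩
                  = min (A s) (B (t+1)) - min (A s) (B t) := by
                have := hSstep2 s t htn; linarith
              have ha' : a ⟨s,hsm⟩ = A (s+1) - A s := by rw [hAstep s hsm]; ring
              have hb' : b ⟨t,htn⟩ = B (t+1) - B t := by rw [hBstep t htn]; ring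
              have hpst : p ⟨s,hsm⟩ ⟨t,htn⟩ =
                  min ((A (s+1) - A s) - (min (A (s+1)) (B t) - min (A s) (B t)))
                      ((B (t+1) - B t) - (min (A s) (B (t+1)) - min (A s) (B t))) := by
                rw [hp ⟨s,hsm⟩ ⟨t,htn⟩, iio_eq', iio_eq']
                simp only [Fin.val_mk]
                simp only [hRow, hCol, ha', hb']
              have hstep : S (s+1) (t+1) = S s (t+1) +
                  ∑ l ∈ Finset.univ.filter (fun l : Fin n => (l:ℕ) < t), p ⟨s,hsm⟩ l
                    + p ⟨s,hsm⟩ ⟨t,htn⟩ := by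
                rw [hSstep1 s (t+1) hsm, stepsum (p ⟨s,hsm⟩) t htn, add_assoc]
              rw [hstep, e1, hRow, hpst]
              linarith [keymin (A s) (A (s+1)) (B t) (B (t+1)) hx hy]
            · push_neg at htn
              rw [hSsat2 (s+1) t htn, hBsat t htn]
              exact ih (s+1) t (by omega)
          · push_neg at hsm
            rw [hSsat1 s (t+1) hsm, hAsat s hsm]
            exact ih s (t+1) (by omega)
    exact fun s t => H (s+t) s t le_rfl
  -- derived facts
  have hAfull : A m = ∑ i, a i := fullsum a
  have hBfull : B n = ∑ l, b l := fullsum b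
  have hBA : B n = A m := by rw [hAfull, hBfull, hab]
  have hRowI : ∀ (i : Fin m) (t : ℕ), ∑ l ∈ Finset.univ.filter (fun l : Fin n => (l:ℕ) < t), p i l
      = min (A ((i:ℕ)+1)) (B t) - min (A (i:ℕ)) (B t) := by
    intro i t
    have := hSstep1 (i:ℕ) t i.isLt
    simp only [Fin.eta] at this
    rw [claim, claim] at this
    linarith
  have hColI : ∀ (s : ℕ) (l : Fin n), ∑ i ∈ Finset.univ.filter (fun i : Fin m => (i:ℕ) < s), p i l
      = min (A s) (B ((l:ℕ)+1)) - min (A s) (B (l:ℕ)) := by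
    intro s l
    have := hSstep2 s (l:ℕ) l.isLt
    simp only [Fin.eta] at this
    rw [claim, claim] at this
    linarith
  have hai : ∀ i : Fin m, a i = A ((i:ℕ)+1) - A (i:ℕ) := by
    intro i; rw [hAstep (i:ℕ) i.isLt]; simp
  have hbl : ∀ l : Fin n, b l = B ((l:ℕ)+1) - B (l:ℕ) := by
    intro l; rw [hBstep (l:ℕ) l.isLt]; simp
  refine ⟨?_, ?_, ?_⟩
  · intro i l
    rw [hp, iio_eq', iio_eq', hRowI i (l:ℕ), hColI (i:ℕ) l]
    have h1 := minlip (A (i:ℕ)) (A ((i:ℕ)+1)) (B (l:ℕ)) (hAmono _ _ (by omega))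
    have h2 := minlip (B (l:ℕ)) (B ((l:ℕ)+1)) (A (i:ℕ)) (hBmono _ _ (by omega))
    rw [min_comm (B (l:ℕ)) (A (i:ℕ)), min_comm (B ((l:ℕ)+1)) (A (i:ℕ))] at h2
    have := hai i; have := hbl l
    apply le_min <;> linarith
  · intro i
    have h1 : ∑ l, p i l = min (A ((i:ℕ)+1)) (B n) - min (A (i:ℕ)) (B n) := by
      rw [← fullsum (p i)]; exact hRowI i n
    rw [h1, hBA, min_eq_left (hAmono _ _ i.isLt), min_eq_left (hAmono _ _ (le_of_lt i.isLt)),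
      hai i]
  · intro l
    have h1 : ∑ i, p i l = min (A m) (B ((l:ℕ)+1)) - min (A m) (B (l:ℕ)) := by
      rw [← fullsum (fun i => p i l)]; exact hColI m l
    rw [h1, ← hBA, min_eq_right (hBmono _ _ l.isLt), min_eq_right (hBmono _ _ (le_of_lt l.isLt)),
      hbl l]

lemma swap4 {m n : ℕ} (G : Fin m → Fin n → Fin m → Fin n → ℝ) :
    ∑ i, ∑ j, ∑ k, ∑ l, G i j k l = ∑ k, ∑ j, ∑ l, ∑ i, G i j k l :=
  calc ∑ i, ∑ j, ∑ k, ∑ l, G i j k l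
      = ∑ i, ∑ k, ∑ j, ∑ l, G i j k l :=
        Finset.sum_congr rfl fun i _ => Finset.sum_comm
    _ = ∑ k, ∑ i, ∑ j, ∑ l, G i j k l := Finset.sum_comm
    _ = ∑ k, ∑ j, ∑ i, ∑ l, G i j k l :=
        Finset.sum_congr rfl fun k _ => Finset.sum_comm
    _ = ∑ k, ∑ j, ∑ l, ∑ i, G i j k l :=
        Finset.sum_congr rfl fun k _ => Finset.sum_congr rfl fun j _ => Finset.sum_comm

lemma cost_split (m n : ℕ) (π0 : Fin m → Fin n → Fin m → Fin n → ℝ) :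
    otCost m n π0 =
      (∑ i : Fin m, ∑ j : Fin n, ∑ k : Fin m, ((k:ℝ)-(i:ℝ))^2 * (∑ l, π0 i j k l))
      + (∑ k : Fin m, ∑ j : Fin n, ∑ l : Fin n, ((j:ℝ)-(l:ℝ))^2 * (∑ i, π0 i j k l)) := by
  unfold otCost
  simp only [add_mul, Finset.sum_add_distrib]
  congr 1
  · refine Finset.sum_congr rfl fun i _ => Finset.sum_congr rfl fun j _ =>
      Finset.sum_congr rfl fun k _ => ?_
    rw [Finset.mul_sum]
    exact Finset.sum_congr rfl fun l _ => by ring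
  · rw [swap4 (fun i j k l => ((j:ℝ)-(l:ℝ))^2 * π0 i j k l)]
    refine Finset.sum_congr rfl fun k _ => Finset.sum_congr rfl fun j _ =>
      Finset.sum_congr rfl fun l _ => ?_
    rw [Finset.mul_sum]

 /-- Proposition 1 of the paper.
If `(f¹, f²)` is an optimal solution of the reduced OT problem with probability
marginals `μ¹, μ²`, then the array `π` produced by the greedy recursion of
Algorithm 1 is an optimal solution of the original OT problem. -/
 theorem stmt4 (m n : ℕ) (hm : 0 < m) (hn : 0 < n)
    (μ1 μ2 : Fin m → Fin n → ℝ)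
    (hμ1 : ∀ i j, 0 ≤ μ1 i j) (hμ2 : ∀ k l, 0 ≤ μ2 k l)
    (hs1 : ∑ i, ∑ j, μ1 i j = 1) (hs2 : ∑ k, ∑ l, μ2 k l = 1)
    (f1 : Fin m → Fin m → Fin n → ℝ) (f2 : Fin m → Fin n → Fin n → ℝ)
    (hfeas : redFeasible m n μ1 μ2 f1 f2)
    (hopt : ∀ g1 g2, redFeasible m n μ1 μ2 g1 g2 → redObj m n f1 f2 ≤ redObj m n g1 g2)
    (π : Fin m → Fin n → Fin m → Fin n → ℝ)
    (hπ : ∀ i j k l, π i j k l =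
      min (f1 i k j - ∑ l' ∈ Finset.Iio l, π i j k l')
          (f2 k j l - ∑ i' ∈ Finset.Iio i, π i' j k l)) :
    otFeasible m n μ1 μ2 π ∧
    ∀ π', otFeasible m n μ1 μ2 π' → otCost m n π ≤ otCost m n π' := by
  classical
  obtain ⟨hf1n, hf2n, hcons, hmarg1, hmarg2⟩ := hfeas
  have NW : ∀ (j : Fin n) (k : Fin m),
      (∀ i l, 0 ≤ π i j k l) ∧ (∀ i, ∑ l, π i j k l = f1 i k j) ∧
      (∀ l, ∑ i, π i j k l = f2 k j l) := fun j k =>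
    nw (fun i => f1 i k j) (fun l => f2 k j l) (fun i => hf1n i k j)
      (fun l => hf2n k j l) (hcons k j) (fun i l => π i j k l)
      (fun i l => hπ i j k l)
  have hpos : ∀ i j k l, 0 ≤ π i j k l := fun i j k l => (NW j k).1 i l
  have hrow : ∀ i j k, ∑ l, π i j k l = f1 i k j := fun i j k => (NW j k).2.1 i
  have hcol : ∀ k j l, ∑ i, π i j k l = f2 k j l := fun k j l => (NW j k).2.2 l
  have hfeasπ : otFeasible m n μ1 μ2 π := by
    refine ⟨hpos, ?_, ?_⟩
    · intro i j
      rw [Finset.sum_congr rfl (fun k _ => hrow i j k)]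
      exact hmarg1 i j
    · intro k l
      rw [Finset.sum_comm, Finset.sum_congr rfl (fun j _ => hcol k j l)]
      exact hmarg2 k l
  refine ⟨hfeasπ, ?_⟩
  intro π' hπ'
  obtain ⟨hp', hr', hc'⟩ := hπ'
  -- cost of π equals the reduced objective of (f1, f2)
  have costπ : otCost m n π = redObj m n f1 f2 := by
    rw [cost_split]
    have e1 : (∑ i : Fin m, ∑ j : Fin n, ∑ k : Fin m, ((k:ℝ)-(i:ℝ))^2 * (∑ l, π i j k l))
        = ∑ i : Fin m, ∑ j : Fin n, ∑ k : Fin m, ((k:ℝ)-(i:ℝ))^2 * f1 i k j :=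
      Finset.sum_congr rfl fun i _ => Finset.sum_congr rfl fun j _ =>
        Finset.sum_congr rfl fun k _ => by rw [hrow i j k]
    have e2 : (∑ k : Fin m, ∑ j : Fin n, ∑ l : Fin n, ((j:ℝ)-(l:ℝ))^2 * (∑ i, π i j k l))
        = ∑ k : Fin m, ∑ j : Fin n, ∑ l : Fin n, ((j:ℝ)-(l:ℝ))^2 * f2 k j l :=
      Finset.sum_congr rfl fun k _ => Finset.sum_congr rfl fun j _ =>
        Finset.sum_congr rfl fun l _ => by rw [hcol k j l]
    rw [e1, e2]
    simp only [redObj, Finset.sum_add_distrib]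
  -- the marginals of π' give a feasible pair for the reduced problem
  have hgfeas : redFeasible m n μ1 μ2 (fun i k j => ∑ l, π' i j k l)
      (fun k j l => ∑ i, π' i j k l) := by
    refine ⟨fun i k j => Finset.sum_nonneg fun l _ => hp' i j k l,
      fun k j l => Finset.sum_nonneg fun i _ => hp' i j k l,
      fun k j => Finset.sum_comm,
      fun i j => hr' i j, fun k l => ?_⟩
    rw [Finset.sum_comm]
    exact hc' k l
  have costπ' : otCost m n π' = redObj m n (fun i k j => ∑ l, π' i j k l)
      (fun k j l => ∑ i, π' i j k l) := by
    rw [cost_split]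
    simp only [redObj, Finset.sum_add_distrib]
  rw [costπ, costπ']
  exact hopt _ _ hgfeas
end
end

section
/- Let m, n be positive integers and let μ¹, μ² be nonnegative functions on I = {1,…,m}×{1,…,n} with ∑_{(i,j)∈I} μ¹_{i,j} = ∑_{(k,l)∈I} μ²_{k,l} = 1. Then the optimal value of the original OT problem with cost c_{i,j;k,l} = (i−k)² + (j−l)² equals the optimal value of the reduced OT problem: min over feasible π of ∑_{(i,j),(k,l)} ((i−k)² + (j−l)²) π_{i,j;k,l} = min over feasible (f⁽¹⁾, f⁽²⁾) of ∑_{(i,j)∈I} [ ∑_{k=1}^m (k−i)² f⁽¹⁾_{i,k,j} + ∑_{l=1}^n (j−l)² f⁽²⁾_{k,j,l} ]. -/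
open Finset

noncomputable section

private lemma sum_comm3 {α β γ : Type*} [Fintype α] [Fintype β] [Fintype γ]
    (g : α → β → γ → ℝ) :
    ∑ i : α, ∑ j : β, ∑ k : γ, g i j k = ∑ k : γ, ∑ j : β, ∑ i : α, g i j k := by
  calc ∑ i : α, ∑ j : β, ∑ k : γ, g i j k
      = ∑ i : α, ∑ k : γ, ∑ j : β, g i j k :=
        Finset.sum_congr rfl fun i _ => Finset.sum_comm
    _ = ∑ k : γ, ∑ i : α, ∑ j : β, g i j k := Finset.sum_comm
    _ = ∑ k : γ, ∑ j : β, ∑ i : α, g i j k :=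
        Finset.sum_congr rfl fun k _ => Finset.sum_comm

/-- Reorder a fourfold sum to the order third, second, fourth, first. -/
private lemma sum_comm4 {α β γ δ : Type*} [Fintype α] [Fintype β] [Fintype γ] [Fintype δ]
    (g : α → β → γ → δ → ℝ) :
    ∑ i : α, ∑ j : β, ∑ k : γ, ∑ l : δ, g i j k l
      = ∑ k : γ, ∑ j : β, ∑ l : δ, ∑ i : α, g i j k l := by
  calc ∑ i : α, ∑ j : β, ∑ k : γ, ∑ l : δ, g i j k l
      = ∑ j : β, ∑ i : α, ∑ k : γ, ∑ l : δ, g i j k l := Finset.sum_comm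
    _ = ∑ j : β, ∑ k : γ, ∑ l : δ, ∑ i : α, g i j k l :=
        Finset.sum_congr rfl fun j _ =>
          calc ∑ i : α, ∑ k : γ, ∑ l : δ, g i j k l
              = ∑ k : γ, ∑ i : α, ∑ l : δ, g i j k l := Finset.sum_comm
            _ = ∑ k : γ, ∑ l : δ, ∑ i : α, g i j k l :=
              Finset.sum_congr rfl fun k _ => Finset.sum_comm
    _ = ∑ k : γ, ∑ j : β, ∑ l : δ, ∑ i : α, g i j k l := Finset.sum_comm

/-- From a feasible plan of the original problem we obtain a feasible pair for the
reduced problem with the same objective value: `f¹` and `f²` are the two partial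
marginals of `π` along the intermediate point `(k, j)`. -/
private lemma ot_to_red (m n : ℕ) (μ1 μ2 : Fin m → Fin n → ℝ)
    (π : Fin m → Fin n → Fin m → Fin n → ℝ) (h : otFeasible m n μ1 μ2 π) :
    ∃ f1 f2, redFeasible m n μ1 μ2 f1 f2 ∧ redObj m n f1 f2 = otCost m n π := by
  obtain ⟨hpos, hm1, hm2⟩ := h
  refine ⟨fun i k j => ∑ l, π i j k l, fun k j l => ∑ i, π i j k l,
    ⟨?_, ?_, ?_, ?_, ?_⟩, ?_⟩
  · intro i k j; exact Finset.sum_nonneg fun l _ => hpos _ _ _ _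
  · intro k j l; exact Finset.sum_nonneg fun i _ => hpos _ _ _ _
  · intro k j; exact Finset.sum_comm
  · intro i j; exact hm1 i j
  · intro k l; rw [Finset.sum_comm]; exact hm2 k l
  · -- objective values agree
    symm
    simp only [otCost, redObj]
    have hsplit : ∀ (i : Fin m) (j : Fin n) (k : Fin m),
        ∑ l : Fin n, (((i : ℝ) - (k : ℝ)) ^ 2 + ((j : ℝ) - (l : ℝ)) ^ 2) * π i j k l
          = ((k : ℝ) - (i : ℝ)) ^ 2 * (∑ l, π i j k l)
            + ∑ l : Fin n, ((j : ℝ) - (l : ℝ)) ^ 2 * π i j k l := by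
      intro i j k
      rw [Finset.mul_sum, ← Finset.sum_add_distrib]
      exact Finset.sum_congr rfl fun l _ => by ring
    calc ∑ i : Fin m, ∑ j : Fin n, ∑ k : Fin m, ∑ l : Fin n,
            (((i : ℝ) - (k : ℝ)) ^ 2 + ((j : ℝ) - (l : ℝ)) ^ 2) * π i j k l
        = ∑ i : Fin m, ∑ j : Fin n, ∑ k : Fin m,
            (((k : ℝ) - (i : ℝ)) ^ 2 * (∑ l, π i j k l)
              + ∑ l : Fin n, ((j : ℝ) - (l : ℝ)) ^ 2 * π i j k l) :=
          Finset.sum_congr rfl fun i _ => Finset.sum_congr rfl fun j _ =>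
            Finset.sum_congr rfl fun k _ => hsplit i j k
      _ = (∑ i : Fin m, ∑ j : Fin n, ∑ k : Fin m,
              ((k : ℝ) - (i : ℝ)) ^ 2 * (∑ l, π i j k l))
          + ∑ i : Fin m, ∑ j : Fin n, ∑ k : Fin m, ∑ l : Fin n,
              ((j : ℝ) - (l : ℝ)) ^ 2 * π i j k l := by
          simp only [Finset.sum_add_distrib]
      _ = (∑ i : Fin m, ∑ j : Fin n, ∑ k : Fin m,
              ((k : ℝ) - (i : ℝ)) ^ 2 * (∑ l, π i j k l))
          + ∑ i : Fin m, ∑ j : Fin n, ∑ l : Fin n, ∑ i' : Fin m,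
              ((j : ℝ) - (l : ℝ)) ^ 2 * π i' j i l := by
          congr 1
          exact sum_comm4 fun (i : Fin m) (j : Fin n) (k : Fin m) (l : Fin n) => ((j : ℝ) - (l : ℝ)) ^ 2 * π i j k l
      _ = (∑ i : Fin m, ∑ j : Fin n, ∑ k : Fin m,
              ((k : ℝ) - (i : ℝ)) ^ 2 * (∑ l, π i j k l))
          + ∑ i : Fin m, ∑ j : Fin n, ∑ l : Fin n,
              ((j : ℝ) - (l : ℝ)) ^ 2 * (∑ i' : Fin m, π i' j i l) := by
          congr 1
          exact Finset.sum_congr rfl fun i _ => Finset.sum_congr rfl fun j _ =>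
            Finset.sum_congr rfl fun l _ => (Finset.mul_sum _ _ _).symm
      _ = ∑ i : Fin m, ∑ j : Fin n,
            ((∑ k : Fin m, ((k : ℝ) - (i : ℝ)) ^ 2 * (∑ l, π i j k l))
              + ∑ l : Fin n, ((j : ℝ) - (l : ℝ)) ^ 2 * (∑ i' : Fin m, π i' j i l)) := by
          simp only [Finset.sum_add_distrib]

/-- From a feasible pair for the reduced problem we obtain a feasible plan of the
original problem with the same objective value, by composing the two flows through
the intermediate points `(k, j)`. -/
private lemma red_to_ot (m n : ℕ) (μ1 μ2 : Fin m → Fin n → ℝ)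
    (f1 : Fin m → Fin m → Fin n → ℝ) (f2 : Fin m → Fin n → Fin n → ℝ)
    (h : redFeasible m n μ1 μ2 f1 f2) :
    ∃ π, otFeasible m n μ1 μ2 π ∧ otCost m n π = redObj m n f1 f2 := by
  obtain ⟨h1, h2, h3, h4, h5⟩ := h
  set S : Fin m → Fin n → ℝ := fun k j => ∑ i, f1 i k j with hSdef
  have hfold : ∀ k j, ∑ i, f1 i k j = S k j := fun _ _ => rfl
  have hS2 : ∀ k j, ∑ l, f2 k j l = S k j := fun k j => (h3 k j).symm
  have hSnn : ∀ k j, 0 ≤ S k j := fun k j => Finset.sum_nonneg fun i _ => h1 i k j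
  have hf1z : ∀ k j, S k j = 0 → ∀ i, f1 i k j = 0 := fun k j hz i =>
    (Finset.sum_eq_zero_iff_of_nonneg (fun i _ => h1 i k j)).mp hz i (Finset.mem_univ i)
  have hf2z : ∀ k j, S k j = 0 → ∀ l, f2 k j l = 0 := fun k j hz l =>
    (Finset.sum_eq_zero_iff_of_nonneg (fun l _ => h2 k j l)).mp
      ((hS2 k j).trans hz) l (Finset.mem_univ l)
  refine ⟨fun i j k l => f1 i k j * f2 k j l / S k j, ⟨?_, ?_, ?_⟩, ?_⟩
  · intro i j k l
    exact div_nonneg (mul_nonneg (h1 i k j) (h2 k j l)) (hSnn k j)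
  · intro i j
    have hrow : ∀ k : Fin m, ∑ l, f1 i k j * f2 k j l / S k j = f1 i k j := by
      intro k
      rw [← Finset.sum_div, ← Finset.mul_sum, hS2]
      by_cases hz : S k j = 0
      · simp [hz, hf1z k j hz i]
      · rw [mul_div_assoc, div_self hz, mul_one]
    calc ∑ k, ∑ l, f1 i k j * f2 k j l / S k j
        = ∑ k, f1 i k j := Finset.sum_congr rfl fun k _ => hrow k
      _ = μ1 i j := h4 i j
  · intro k l
    have hcol : ∀ j : Fin n, ∑ i, f1 i k j * f2 k j l / S k j = f2 k j l := by
      intro j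
      rw [← Finset.sum_div, ← Finset.sum_mul, hfold]
      by_cases hz : S k j = 0
      · simp [hz, hf2z k j hz l]
      · rw [mul_comm, mul_div_assoc, div_self hz, mul_one]
    calc ∑ i, ∑ j, f1 i k j * f2 k j l / S k j
        = ∑ j, ∑ i, f1 i k j * f2 k j l / S k j := Finset.sum_comm
      _ = ∑ j, f2 k j l := Finset.sum_congr rfl fun j _ => hcol j
      _ = μ2 k l := h5 k l
  · -- objective values agree
    simp only [otCost, redObj]
    have key : ∀ (k : Fin m) (j : Fin n),
        (∑ l : Fin n, ∑ i : Fin m, (((i : ℝ) - (k : ℝ)) ^ 2 + ((j : ℝ) - (l : ℝ)) ^ 2)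
            * (f1 i k j * f2 k j l / S k j))
          = (∑ i : Fin m, ((i : ℝ) - (k : ℝ)) ^ 2 * f1 i k j)
            + ∑ l : Fin n, ((j : ℝ) - (l : ℝ)) ^ 2 * f2 k j l := by
      intro k j
      by_cases hz : S k j = 0
      · simp [hf1z k j hz, hf2z k j hz]
      · have step1 : (∑ l : Fin n, ∑ i : Fin m,
            (((i : ℝ) - (k : ℝ)) ^ 2 + ((j : ℝ) - (l : ℝ)) ^ 2)
              * (f1 i k j * f2 k j l / S k j))
            = (∑ l : Fin n, ∑ i : Fin m,
                (((i : ℝ) - (k : ℝ)) ^ 2 * f1 i k j * f2 k j l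
                  + f1 i k j * (((j : ℝ) - (l : ℝ)) ^ 2 * f2 k j l))) / S k j := by
          rw [Finset.sum_div]
          refine Finset.sum_congr rfl fun l _ => ?_
          rw [Finset.sum_div]
          exact Finset.sum_congr rfl fun i _ => by ring
        have step2 : (∑ l : Fin n, ∑ i : Fin m,
            (((i : ℝ) - (k : ℝ)) ^ 2 * f1 i k j * f2 k j l
              + f1 i k j * (((j : ℝ) - (l : ℝ)) ^ 2 * f2 k j l)))
            = ((∑ i : Fin m, ((i : ℝ) - (k : ℝ)) ^ 2 * f1 i k j)
                + ∑ l : Fin n, ((j : ℝ) - (l : ℝ)) ^ 2 * f2 k j l) * S k j := by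
          simp only [Finset.sum_add_distrib]
          rw [add_mul]
          congr 1
          · rw [← hS2 k j, Finset.sum_mul_sum]
            exact Finset.sum_comm
          · rw [← hfold k j, Finset.sum_mul_sum]
            exact Finset.sum_congr rfl fun l _ =>
              Finset.sum_congr rfl fun i _ => by ring
        rw [step1, step2, mul_div_assoc, div_self hz, mul_one]
    calc ∑ i : Fin m, ∑ j : Fin n, ∑ k : Fin m, ∑ l : Fin n,
            (((i : ℝ) - (k : ℝ)) ^ 2 + ((j : ℝ) - (l : ℝ)) ^ 2)
              * (f1 i k j * f2 k j l / S k j)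
        = ∑ k : Fin m, ∑ j : Fin n, ∑ l : Fin n, ∑ i : Fin m,
            (((i : ℝ) - (k : ℝ)) ^ 2 + ((j : ℝ) - (l : ℝ)) ^ 2)
              * (f1 i k j * f2 k j l / S k j) :=
          sum_comm4 _
      _ = ∑ k : Fin m, ∑ j : Fin n,
            ((∑ i : Fin m, ((i : ℝ) - (k : ℝ)) ^ 2 * f1 i k j)
              + ∑ l : Fin n, ((j : ℝ) - (l : ℝ)) ^ 2 * f2 k j l) :=
          Finset.sum_congr rfl fun k _ => Finset.sum_congr rfl fun j _ => key k j
      _ = (∑ k : Fin m, ∑ j : Fin n, ∑ i : Fin m, ((i : ℝ) - (k : ℝ)) ^ 2 * f1 i k j)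
          + ∑ k : Fin m, ∑ j : Fin n, ∑ l : Fin n, ((j : ℝ) - (l : ℝ)) ^ 2 * f2 k j l := by
          simp only [Finset.sum_add_distrib]
      _ = (∑ i : Fin m, ∑ j : Fin n, ∑ k : Fin m, ((k : ℝ) - (i : ℝ)) ^ 2 * f1 i k j)
          + ∑ i : Fin m, ∑ j : Fin n, ∑ l : Fin n, ((j : ℝ) - (l : ℝ)) ^ 2 * f2 i j l := by
          congr 1
          rw [sum_comm3 fun (i : Fin m) (j : Fin n) (k : Fin m) => ((k : ℝ) - (i : ℝ)) ^ 2 * f1 i k j]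
          exact Finset.sum_congr rfl fun k _ => Finset.sum_congr rfl fun j _ =>
            Finset.sum_congr rfl fun i _ => by ring
      _ = ∑ i : Fin m, ∑ j : Fin n,
            ((∑ k : Fin m, ((k : ℝ) - (i : ℝ)) ^ 2 * f1 i k j)
              + ∑ l : Fin n, ((j : ℝ) - (l : ℝ)) ^ 2 * f2 i j l) := by
          simp only [Finset.sum_add_distrib]

/-- Theorem 1 of Auricchio et al., used in Proposition 1.
For probability marginals `μ¹, μ²`, the optimal value of the original OT problem with
squared Euclidean ground cost equals the optimal value of the reduced OT problem. -/
theorem stmt5 (m n : ℕ) (hm : 0 < m) (hn : 0 < n)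
    (μ1 μ2 : Fin m → Fin n → ℝ)
    (hμ1 : ∀ i j, 0 ≤ μ1 i j) (hμ2 : ∀ k l, 0 ≤ μ2 k l)
    (hs1 : ∑ i, ∑ j, μ1 i j = 1) (hs2 : ∑ k, ∑ l, μ2 k l = 1) :
    sInf {v : ℝ | ∃ π, otFeasible m n μ1 μ2 π ∧ v = otCost m n π} =
      sInf {v : ℝ | ∃ f1 f2, redFeasible m n μ1 μ2 f1 f2 ∧ v = redObj m n f1 f2} := by
  have hset : {v : ℝ | ∃ π, otFeasible m n μ1 μ2 π ∧ v = otCost m n π}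
      = {v : ℝ | ∃ f1 f2, redFeasible m n μ1 μ2 f1 f2 ∧ v = redObj m n f1 f2} := by
    ext v
    constructor
    · rintro ⟨π, hπ, rfl⟩
      obtain ⟨f1, f2, hf, he⟩ := ot_to_red m n μ1 μ2 π hπ
      exact ⟨f1, f2, hf, he.symm⟩
    · rintro ⟨f1, f2, hf, rfl⟩
      obtain ⟨π, hπ, he⟩ := red_to_ot m n μ1 μ2 f1 f2 hf
      exact ⟨π, hπ, he.symm⟩
  rw [hset]
end
end

section
/- Let m, n be positive integers, M = mn, M₃ = 3M − 1, N = m²n + mn². The matrix A = [[A₁, A₂], [A₃, 0], [0, A₄]] ∈ ℝ^{M₃×N} has full row rank, i.e., rank(A) = M₃ = 3mn − 1. -/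
open Matrix Finset

noncomputable section

/-- The bijection between row indices `r ∈ Fin (nm − 1)` of `A₄` and pairs
`(l,k) ∈ Fin n × Fin m` (with `k` the inner/fast index): `r ↦ (r / m, r % m)`. -/
def rowIdx (m n : ℕ) (hm : 0 < m) (r : Fin (n * m - 1)) : Fin n × Fin m :=
  (⟨r.1 / m, (Nat.div_lt_iff_lt_mul hm).mpr (lt_of_lt_of_le r.2 (Nat.sub_le _ _))⟩,
   ⟨r.1 % m, Nat.mod_lt _ hm⟩)

/-- The constraint matrix `A = [[A₁, A₂], [A₃, 0], [0, A₄]] ∈ ℝ^{M₃ × N}` of the reduced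
OT model, where `M = mn`, `M₃ = 3M − 1`, `N = m²n + mn²`,
`A₁ = I_M ⊗ 1ₘᵀ`, `A₂ = −1ₙᵀ ⊗ I_M`, `A₃ = Iₙ ⊗ (1ₘᵀ ⊗ Iₘ)`, and
`A₄ = diag(1ₙᵀ ⊗ Iₘ, …, 1ₙᵀ ⊗ Iₘ, 1ₙᵀ ⊗ Īₘ)` (i.e. `Â₄ = Iₙ ⊗ (1ₙᵀ ⊗ Iₘ)` with its
last row deleted).  The `f⁽¹⁾`-columns are triples `(j,k,i)`, the `f⁽²⁾`-columns are
triples `(l,j,k)`; the three row blocks correspond to the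
flow-balance constraints (bins `(j,k)`), the `μ¹`-constraints (bins `(j,i)`), and the
`μ²`-constraints (pairs `(l,k)` with the last one deleted). -/
def Amat (m n : ℕ) (hm : 0 < m) :
    Matrix ((Fin n × Fin m) ⊕ (Fin n × Fin m) ⊕ Fin (n * m - 1))
      ((Fin n × Fin m × Fin m) ⊕ (Fin n × Fin n × Fin m)) ℝ :=
  Matrix.of fun r c =>
    match r, c with
    | .inl p, .inl c1 => if p.1 = c1.1 ∧ p.2 = c1.2.1 then 1 else 0
    | .inl p, .inr c2 => if p.1 = c2.2.1 ∧ p.2 = c2.2.2 then -1 else 0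
    | .inr (.inl p), .inl c1 => if p.1 = c1.1 ∧ p.2 = c1.2.2 then 1 else 0
    | .inr (.inl _), .inr _ => 0
    | .inr (.inr _), .inl _ => 0
    | .inr (.inr r), .inr c2 =>
        if (rowIdx m n hm r).1 = c2.1 ∧ (rowIdx m n hm r).2 = c2.2.2 then 1 else 0

/-- An explicit right inverse of `Amat`. -/
def Bmat (m n : ℕ) (hm : 0 < m) (hn : 0 < n) :
    Matrix ((Fin n × Fin m × Fin m) ⊕ (Fin n × Fin n × Fin m))
      ((Fin n × Fin m) ⊕ (Fin n × Fin m) ⊕ Fin (n * m - 1)) ℝ :=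
  let K : Fin m := ⟨m - 1, Nat.sub_lt hm one_pos⟩
  let L : Fin n := ⟨n - 1, Nat.sub_lt hn one_pos⟩
  let z : Fin n := ⟨0, hn⟩
  Matrix.of fun c t =>
    match c, t with
    | .inl c1, .inl p =>
        if c1.1 = p.1 then ((if c1.2.1 = p.2 then 1 else 0) - (if c1.2.1 = K then 1 else 0)) / m
        else 0
    | .inr c2, .inl p => if c2.1 = L ∧ c2.2.1 = p.1 ∧ c2.2.2 = K then -1 else 0
    | .inl c1, .inr (.inl p) => if c1.1 = p.1 ∧ c1.2.1 = K ∧ c1.2.2 = p.2 then 1 else 0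
    | .inr c2, .inr (.inl p) => if c2.1 = L ∧ c2.2.1 = p.1 ∧ c2.2.2 = K then 1 else 0
    | .inl c1, .inr (.inr r) =>
        if c1.1 = z then
          ((if c1.2.1 = (rowIdx m n hm r).2 then 1 else 0) - (if c1.2.1 = K then 1 else 0)) / m
        else 0
    | .inr c2, .inr (.inr r) =>
        if c2.2.1 = z then
          (if c2.1 = (rowIdx m n hm r).1 ∧ c2.2.2 = (rowIdx m n hm r).2 then 1 else 0)
            - (if c2.1 = L ∧ c2.2.2 = K then 1 else 0)
        else 0

lemma sumconst (m : ℕ) (hm : 0 < m) (c : ℝ) : ∑ _x : Fin m, c / (m:ℝ) = c := by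
  have : (m:ℝ) ≠ 0 := Nat.cast_ne_zero.mpr hm.ne'
  rw [Finset.sum_const, card_univ, Fintype.card_fin, nsmul_eq_mul]
  field_simp

lemma sumdelta (m : ℕ) (a b : Fin m) :
    ∑ x : Fin m, ((if x = a then (1:ℝ) else 0) - if x = b then 1 else 0) / (m:ℝ) = 0 := by
  rw [← Finset.sum_div, Finset.sum_sub_distrib]
  simp

lemma rowIdx_inj (m n : ℕ) (hm : 0 < m) (r r' : Fin (n * m - 1))
    (h : rowIdx m n hm r = rowIdx m n hm r') : r = r' := by
  have h1 : r.1 / m = r'.1 / m := congrArg (fun p => (p.1 : Fin n).1) h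
  have h2 : r.1 % m = r'.1 % m := congrArg (fun p => (p.2 : Fin m).1) h
  have h3 : m * (r.1 / m) = m * (r'.1 / m) := by rw [h1]
  have := Nat.div_add_mod r.1 m
  have := Nat.div_add_mod r'.1 m
  exact Fin.ext (by omega)

lemma rowIdx_ne_last (m n : ℕ) (hm : 0 < m) (hn : 0 < n) (r : Fin (n * m - 1)) :
    ¬((rowIdx m n hm r).1.1 = n - 1 ∧ (rowIdx m n hm r).2.1 = m - 1) := by
  rintro ⟨h1, h2⟩
  have hr := r.2
  have := Nat.div_add_mod r.1 m
  simp only [rowIdx] at h1 h2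
  have hnm : m ≤ n * m := Nat.le_mul_of_pos_left m hn
  have h3 : m * (r.1 / m) = m * (n - 1) := by rw [h1]
  have h4 : m * (n - 1) = n * m - m := by
    rw [Nat.mul_sub_one, Nat.mul_comm]
  omega

theorem ABone (m n : ℕ) (hm : 0 < m) (hn : 0 < n) :
    Amat m n hm * Bmat m n hm hn = 1 := by
  have hm' : (m:ℝ) ≠ 0 := Nat.cast_ne_zero.mpr hm.ne'
  ext s t
  rcases s with p | p | r <;> rcases t with q | q | r' <;>
    simp [Amat, Bmat, Matrix.mul_apply, Fintype.sum_sum_type, Fintype.sum_prod_type,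
      Matrix.one_apply, ite_and, mul_ite, ite_mul, Finset.sum_ite_eq, Finset.sum_ite_eq',
      Prod.ext_iff, sumconst m hm, sumdelta]
  · split_ifs <;> simp [sumconst m hm, hm']
  · split_ifs <;> simp [sumconst m hm, hm']
  · split_ifs <;> simp [sumconst m hm, hm']
  · intro h1 h2
    exact rowIdx_ne_last m n hm hn r ⟨congrArg Fin.val h1, congrArg Fin.val h2⟩
  · intro h1 h2
    exact rowIdx_ne_last m n hm hn r ⟨congrArg Fin.val h1, congrArg Fin.val h2⟩
  · by_cases h : r = r'
    · subst h
      rw [← ite_and, ← ite_and, if_pos (⟨rfl, rfl⟩ : _ ∧ _),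
        if_neg (fun hc => rowIdx_ne_last m n hm hn r
          ⟨congrArg Fin.val hc.1, congrArg Fin.val hc.2⟩), if_pos rfl]
      norm_num
    · rw [← ite_and, ← ite_and, if_neg h,
        if_neg (fun hc => h (rowIdx_inj m n hm r r' (Prod.ext hc.1 hc.2))),
        if_neg (fun hc => rowIdx_ne_last m n hm hn r
          ⟨congrArg Fin.val hc.1, congrArg Fin.val hc.2⟩)]
      norm_num


/-- the matrix `A` has full row rank `M₃ = 3mn − 1`. -/
theorem stmt6 (m n : ℕ) (hm : 0 < m) (hn : 0 < n) :
    (Amat m n hm).rank = 3 * (m * n) - 1 := by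
  have hnm : 0 < n * m := Nat.mul_pos hn hm
  have hcard : Fintype.card ((Fin n × Fin m) ⊕ (Fin n × Fin m) ⊕ Fin (n * m - 1))
      = 3 * (m * n) - 1 := by
    simp [Fintype.card_sum, Fintype.card_prod]
    have : n * m = m * n := Nat.mul_comm n m
    omega
  apply le_antisymm
  · calc (Amat m n hm).rank ≤ _ := (Amat m n hm).rank_le_card_height
    _ = 3 * (m * n) - 1 := hcard
  · calc 3 * (m * n) - 1
        = (1 : Matrix ((Fin n × Fin m) ⊕ (Fin n × Fin m) ⊕ Fin (n * m - 1)) _ ℝ).rank := by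
          rw [Matrix.rank_one, hcard]
    _ = (Amat m n hm * Bmat m n hm hn).rank := by rw [ABone]
    _ ≤ (Amat m n hm).rank := Matrix.rank_mul_le_left _ _
end
end

section
/- In the setting of the HOT iteration with limit point w* = (y*, z*, x*), for any given tolerance ε > 0 and any k ≥ 0 with k + 1 ≥ (1/ε) · ((1 + σ)/σ) · ( ‖x⁰ − x*‖ + σ ‖z⁰ − z*‖ ), the iterate w̄ᵏ satisfies ‖ℛ(w̄ᵏ)‖ ≤ ε. In particular, HOT needs at most (1/ε)·((1+σ)/σ)·(‖x⁰ − x*‖ + σ‖z⁰ − z*‖) − 1 iterations to return a point with KKT residual at most ε. -/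
open Matrix Finset Filter Topology

noncomputable section

/-- The right-hand side `b = (0_M; μ¹; Ī_M μ²) ∈ ℝ^{M₃}`. -/
def bvec (m n : ℕ) (hm : 0 < m) (μ1 μ2 : Fin n × Fin m → ℝ) :
    (Fin n × Fin m) ⊕ (Fin n × Fin m) ⊕ Fin (n * m - 1) → ℝ :=
  Sum.elim (0 : Fin n × Fin m → ℝ) (Sum.elim μ1 (fun r => μ2 (rowIdx m n hm r)))

/-- The cost vector `c = (c¹; c²) ∈ ℝ^N` with `c¹_{i,k,j} = (k−i)²` (at the
`f⁽¹⁾`-column `(j,k,i)`) and `c²_{k,j,l} = (j−l)²` (at the `f⁽²⁾`-column `(l,j,k)`). -/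
def cvec (m n : ℕ) : (Fin n × Fin m × Fin m) ⊕ (Fin n × Fin n × Fin m) → ℝ :=
  Sum.elim (fun q => (((q.2.1 : ℕ) : ℝ) - ((q.2.2 : ℕ) : ℝ)) ^ 2)
    (fun q => (((q.2.1 : ℕ) : ℝ) - ((q.1 : ℕ) : ℝ)) ^ 2)

section AuxLemmas

theorem halpern_rate' {E : Type*} [NormedAddCommGroup E] [InnerProductSpace ℝ E]
    (N : E → E) (hN : ∀ a b, ‖N a - N b‖ ≤ ‖a - b‖)
    (v : ℕ → E)
    (hrec : ∀ k : ℕ, v (k + 1) =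
      (1 / ((k : ℝ) + 2)) • v 0 + (((k : ℝ) + 1) / ((k : ℝ) + 2)) • N (v k))
    (vs : E) (hfix : N vs = vs) (k : ℕ) :
    ‖v k - N (v k)‖ ≤ 2 * ‖v 0 - vs‖ / ((k : ℝ) + 1) := by
  set G : ℕ → E := fun k => v k - N (v k) with hG
  have coco : ∀ a b : E, ‖(a - N a) - (b - N b)‖ ^ 2 ≤
      2 * inner ℝ ((a - N a) - (b - N b)) (a - b) := by
    intro a b
    have h1 : ‖N a - N b‖ ^ 2 ≤ ‖a - b‖ ^ 2 := by
      have := hN a b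
      nlinarith [norm_nonneg (N a - N b), norm_nonneg (a - b)]
    have h2 : N a - N b = (a - b) - ((a - N a) - (b - N b)) := by abel
    rw [h2, norm_sub_sq_real] at h1
    have h3 : (inner ℝ ((a - N a) - (b - N b)) (a - b) : ℝ)
        = inner ℝ (a - b) ((a - N a) - (b - N b)) := real_inner_comm _ _
    nlinarith [h1, h3]
  have hpot : ∀ k : ℕ, ((k : ℝ) * ((k : ℝ) + 1) / 2) * ‖G k‖ ^ 2
      + ((k : ℝ) + 1) * inner ℝ (G k) (v k - v 0) ≤ 0 := by
    intro k
    induction k with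
    | zero => simp
    | succ k ih =>
      have hβ0 : ((k : ℝ) + 1) + 1 ≠ 0 := by positivity
      have hNvk : N (v k) = v k - G k := by simp [hG]
      have hv1 : v (k+1) - v 0 = (((k:ℝ)+1) / (((k:ℝ)+1)+1)) • (v k - G k - v 0) := by
        rw [hrec k, hNvk]; push_cast; match_scalars <;> (field_simp <;> try ring) <;> try tauto
      have hv2 : v (k+1) - v k =
          (1 / (((k:ℝ)+1)+1)) • (v 0 - v k - ((k:ℝ)+1) • G k) := by
        rw [hrec k, hNvk]; push_cast; match_scalars <;> (field_simp <;> try ring) <;> try tauto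
      -- scalar abbreviations
      set β : ℝ := (k : ℝ) + 1 with hβ
      have hβ1 : (1 : ℝ) ≤ β := by rw [hβ]; linarith [Nat.cast_nonneg (α := ℝ) k]
      have hco := coco (v (k+1)) (v k)
      rw [show v (k+1) - N (v (k+1)) = G (k+1) from rfl,
          show v k - N (v k) = G k from rfl, hv2] at hco
      rw [inner_smul_right] at hco
      have hexp : (inner ℝ (G (k+1) - G k) (v 0 - v k - β • G k) : ℝ)
          = - inner ℝ (G (k+1)) (v k - v 0) + inner ℝ (G k) (v k - v 0)
            - β * inner ℝ (G (k+1)) (G k) + β * ‖G k‖ ^ 2 := by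
        rw [show v 0 - v k - β • G k = -(v k - v 0) - β • G k by abel]
        rw [inner_sub_left, inner_sub_right, inner_sub_right, inner_neg_right,
            inner_neg_right, inner_smul_right, inner_smul_right,
            real_inner_self_eq_norm_sq]
        ring
      have hnrm : ‖G (k+1) - G k‖ ^ 2
          = ‖G (k+1)‖ ^ 2 - 2 * inner ℝ (G (k+1)) (G k) + ‖G k‖ ^ 2 :=
        norm_sub_sq_real _ _
      -- rewrite φ(k+1)
      have hphi1 : (inner ℝ (G (k+1)) (v (k+1) - v 0) : ℝ)
          = (β / (β+1)) * (inner ℝ (G (k+1)) (v k - v 0) - inner ℝ (G (k+1)) (G k)) := by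
        rw [hv1, inner_smul_right,
            show v k - G k - v 0 = (v k - v 0) - G k by abel,
            inner_sub_right]
      push_cast
      rw [show ((k:ℝ)+1) = β from rfl, show ((k:ℝ)+1+1) = β + 1 by rw [hβ]]
      rw [hphi1]
      rw [hnrm] at hco
      have hb1 : (0:ℝ) < β + 1 := by linarith
      set P := ‖G (k+1)‖ ^ 2
      set S := ‖G k‖ ^ 2
      set Q : ℝ := inner ℝ (G (k+1)) (G k)
      set a : ℝ := inner ℝ (G (k+1)) (v k - v 0)
      set b : ℝ := inner ℝ (G k) (v k - v 0)
      rw [hexp] at hco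
      -- hco : P - 2Q + S ≤ 2 * ((1/(β+1)) * (-a + b - βQ + βS))
      have hco' : (β+1) * (P - 2*Q + S) ≤ 2 * (-a + b - β*Q + β*S) := by
        have h := mul_le_mul_of_nonneg_left hco (le_of_lt hb1)
        have heq : (β+1) * (2 * (1/(β+1) * (-a + b - β*Q + β*S)))
            = 2*(-a+b-β*Q+β*S) := by field_simp
        exact h.trans_eq heq
      -- ih : ((k:ℝ) * β / 2) * S + β * b ≤ 0, with (k:ℝ) = β - 1
      have hih : ((β - 1) * β / 2) * S + β * b ≤ 0 := by
        have : ((k:ℝ)) = β - 1 := by rw [hβ]; ring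
        rw [← this]; exact ih
      -- goal : (β*(β+1)/2) * P + (β+1) * ((β/(β+1)) * (a - Q)) ≤ 0
      have hgoal : (β+1) * ((β/(β+1)) * (a - Q)) = β * (a - Q) := by field_simp
      rw [hgoal]
      nlinarith [mul_le_mul_of_nonneg_left hco' (by linarith : (0:ℝ) ≤ β / 2)]
  -- final step
  have hcs := coco (v k) vs
  rw [hfix, sub_self, sub_zero] at hcs
  have hpk := hpot k
  have hk1 : (0:ℝ) < (k : ℝ) + 1 := by positivity
  have hinner : (inner ℝ (G k) (v k - vs) : ℝ)
      = inner ℝ (G k) (v k - v 0) + inner ℝ (G k) (v 0 - vs) := by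
    rw [← inner_add_right]; congr 1; abel
  have hCS : (inner ℝ (G k) (v 0 - vs) : ℝ) ≤ ‖G k‖ * ‖v 0 - vs‖ :=
    real_inner_le_norm _ _
  have hfin : (((k:ℝ)+1)) * ‖G k‖ ^ 2 ≤ 2 * ‖G k‖ * ‖v 0 - vs‖ := by
    rw [hinner] at hcs
    nlinarith [hpk, hcs, hCS]
  have : ‖G k‖ ≤ 2 * ‖v 0 - vs‖ / ((k:ℝ)+1) := by
    rcases eq_or_lt_of_le (norm_nonneg (G k)) with h0 | h0
    · rw [← h0]; positivity
    · rw [le_div_iff₀ hk1]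
      have := hfin
      nlinarith
  exact this
theorem res2_bound (σ s t : ℝ) (hσ : 0 < σ) :
    (max (2*s - t) 0 - max (max (2*s - t) 0 - σ*(t - s)) 0)^2
      ≤ σ^2 * (s - max (2*s - t) 0)^2 := by
  rcases le_total (2*s - t) 0 with h1 | h1
  · rw [max_eq_right h1]
    rcases le_total (0 - σ*(t-s)) 0 with h2 | h2
    · rw [max_eq_right h2]; norm_num; positivity
    · rw [max_eq_left h2]
      have hts : t - s ≤ 0 := by nlinarith
      have hs0 : s ≤ 0 := by linarith
      nlinarith [mul_nonneg (by linarith : (0:ℝ) ≤ t - 2*s) (by linarith : (0:ℝ) ≤ -t),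
        sq_nonneg σ, hσ.le, sq_nonneg (σ*(t-s))]
  · rw [max_eq_left h1]
    rcases le_total ((2*s - t) - σ*(t-s)) 0 with h2 | h2
    · rw [max_eq_right h2]
      nlinarith [mul_nonneg (by linarith : (0:ℝ) ≤ σ*(t-s) - (2*s-t))
        (by linarith : (0:ℝ) ≤ σ*(t-s) + (2*s-t))]
    · rw [max_eq_left h2]; nlinarith [sq_nonneg (σ*(t-s))]
theorem abs_sub_abs_sq_le (a b : ℝ) : (|a| - |b|)^2 ≤ (a - b)^2 := by
  nlinarith [abs_mul a b, le_abs_self (a*b), sq_abs a, sq_abs b, abs_nonneg (a*b)]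

theorem two_max_sub (t : ℝ) : 2 * max t 0 - t = |t| := by
  rcases le_total t 0 with h | h <;>
    simp [max_eq_left, max_eq_right, abs_of_nonpos, abs_of_nonneg, h] <;> ring

end AuxLemmas

theorem rowIdx_inj_s11 (m n : ℕ) (hm : 0 < m) : Function.Injective (rowIdx m n hm) := by
  intro r s h
  simp only [rowIdx, Prod.mk.injEq, Fin.mk.injEq] at h
  apply Fin.ext
  rw [← Nat.div_add_mod r.1 m, ← Nat.div_add_mod s.1 m, h.1, h.2]


theorem amat_ker (m n : ℕ) (hm : 0 < m) (hn : 0 < n)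
    (y : (Fin n × Fin m) ⊕ (Fin n × Fin m) ⊕ Fin (n * m - 1) → ℝ)
    (hy : ∀ c, ∑ r, Amat m n hm r c * y r = 0) : y = 0 := by
  have hs1 : ∀ (j : Fin n) (k : Fin m) (f : Fin n × Fin m → ℝ),
      (∑ x : Fin n × Fin m, if x.1 = j ∧ x.2 = k then f x else 0) = f (j, k) := by
    intro j k f
    have e : ∀ x : Fin n × Fin m,
        (if x.1 = j ∧ x.2 = k then f x else 0) = (if x = (j, k) then f x else 0) := by
      intro x
      apply if_congr _ rfl rfl
      simp [Prod.ext_iff]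
    rw [Finset.sum_congr rfl fun x _ => e x]
    simp
  have E1 : ∀ (j : Fin n) (k i : Fin m),
      y (.inl (j, k)) + y (.inr (.inl (j, i))) = 0 := by
    intro j k i
    have h := hy (.inl (j, k, i))
    simp only [Amat, Matrix.of_apply, Fintype.sum_sum_type, ite_mul, one_mul, zero_mul,
      zero_add, add_zero, Finset.sum_const_zero] at h
    rw [hs1, hs1] at h
    exact h
  -- equations at f2-columns
  have E2 : ∀ (l : Fin n) (j : Fin n) (k : Fin m),
      -y (.inl (j, k)) +
        (∑ r : Fin (n * m - 1), if rowIdx m n hm r = (l, k) then y (.inr (.inr r)) else 0)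
        = 0 := by
    intro l j k
    have h := hy (.inr (l, j, k))
    simp only [Amat, Matrix.of_apply, Fintype.sum_sum_type, ite_mul, one_mul, zero_mul,
      neg_mul, zero_add, add_zero, Finset.sum_const_zero] at h
    have e : ∀ x : Fin (n * m - 1),
        (if (rowIdx m n hm x).1 = l ∧ (rowIdx m n hm x).2 = k then y (.inr (.inr x)) else 0)
        = (if rowIdx m n hm x = (l, k) then y (.inr (.inr x)) else 0) := by
      intro x
      apply if_congr _ rfl rfl
      simp [Prod.ext_iff]
    rw [hs1 j k (fun x => -y (Sum.inl x)),
      Finset.sum_congr rfl fun x _ => e x] at h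
    exact h
  have hlast : ∀ r : Fin (n * m - 1),
      rowIdx m n hm r ≠ (⟨n - 1, by omega⟩, ⟨m - 1, by omega⟩) := by
    intro r h
    simp only [rowIdx, Prod.mk.injEq, Fin.mk.injEq] at h
    have hdm := Nat.div_add_mod r.1 m
    have hr2 := r.2
    have hmul : m * (r.1 / m) = m * (n - 1) := by rw [h.1]
    have hpred : m * (n - 1) = m * n - m := by
      cases n with
      | zero => omega
      | succ n' => simp [Nat.mul_succ]
    have hle : m ≤ m * n := Nat.le_mul_of_pos_right m hn
    have hcm : m * n = n * m := Nat.mul_comm m n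
    omega
  set ln : Fin n := ⟨n - 1, by omega⟩
  set km : Fin m := ⟨m - 1, by omega⟩
  set j0 : Fin n := ⟨0, hn⟩
  set k0 : Fin m := ⟨0, hm⟩
  have hS0 : (∑ r : Fin (n * m - 1),
      if rowIdx m n hm r = (ln, km) then y (.inr (.inr r)) else 0) = 0 :=
    Finset.sum_eq_zero fun r _ => if_neg (hlast r)
  have hy1 : ∀ (j : Fin n) (k : Fin m), y (.inl (j, k)) = 0 := by
    intro j k
    have h1 := E2 ln j km
    rw [hS0] at h1
    have h2 := E1 j km k0
    have h3 := E1 j k k0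
    linarith
  have hy2 : ∀ (j : Fin n) (i : Fin m), y (.inr (.inl (j, i))) = 0 := by
    intro j i
    have := E1 j k0 i
    rw [hy1 j k0] at this
    linarith
  have hy3 : ∀ r0 : Fin (n * m - 1), y (.inr (.inr r0)) = 0 := by
    intro r0
    have h1 := E2 (rowIdx m n hm r0).1 j0 (rowIdx m n hm r0).2
    have e : ∀ r : Fin (n * m - 1),
        (if rowIdx m n hm r = ((rowIdx m n hm r0).1, (rowIdx m n hm r0).2)
          then y (.inr (.inr r)) else 0)
        = (if r = r0 then y (.inr (.inr r)) else 0) := by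
      intro r
      apply if_congr _ rfl rfl
      rw [Prod.mk.eta]
      exact ⟨fun h => rowIdx_inj_s11 m n hm h, fun h => by rw [h]⟩
    rw [Finset.sum_congr rfl fun r _ => e r, Finset.sum_ite_eq' Finset.univ r0,
      if_pos (Finset.mem_univ r0), hy1 j0] at h1
    linarith
  funext x
  rcases x with p | p | r
  · exact hy1 p.1 p.2
  · exact hy2 p.1 p.2
  · exact hy3 r

theorem amat_isUnit_det (m n : ℕ) (hm : 0 < m) (hn : 0 < n) :
    IsUnit (Amat m n hm * (Amat m n hm)ᵀ).det := by
  rw [isUnit_iff_ne_zero]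
  intro hdet
  obtain ⟨v, hv0, hv⟩ := (Matrix.exists_mulVec_eq_zero_iff).mpr hdet
  set B := Amat m n hm
  have ht : Bᵀ.mulVec v = 0 := by
    have h1 : (Bᵀ.mulVec v) ⬝ᵥ (Bᵀ.mulVec v) = 0 := by
      rw [Matrix.dotProduct_mulVec, Matrix.vecMul_transpose, Matrix.mulVec_mulVec, hv]
      simp
    funext c
    have h2 := (Finset.sum_eq_zero_iff_of_nonneg
      (fun i _ => mul_self_nonneg (Bᵀ.mulVec v i))).mp h1 c (Finset.mem_univ c)
    exact mul_self_eq_zero.mp h2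
  apply hv0
  apply amat_ker m n hm hn v
  intro c
  have := congrFun ht c
  simpa [Matrix.mulVec, dotProduct, Matrix.transpose_apply] using this

set_option maxHeartbeats 2000000

/-- iteration-count part of the main Theorem of the paper.
If `w* = (y*, z*, x*)` is the (KKT) limit point of the sequence `{w̄ᵏ}` generated by
the HOT iteration, then for any tolerance `ε > 0` and any `k ≥ 0` with
`k + 1 ≥ (1/ε) ((1+σ)/σ) (‖x⁰ − x*‖ + σ ‖z⁰ − z*‖)`, the Euclidean norm of the KKT
residual `ℛ(w̄ᵏ) = (b − A x̄ᵏ, z̄ᵏ − Π_{ℝ₊}(z̄ᵏ − x̄ᵏ), c − Aᵀ ȳᵏ − z̄ᵏ)` is at most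
`ε`; i.e. HOT needs at most `(1/ε)((1+σ)/σ)(‖x⁰ − x*‖ + σ‖z⁰ − z*‖) − 1` iterations to
reach KKT residual `ε`. -/
theorem stmt11 (m n : ℕ) (hm : 0 < m) (hn : 0 < n)
    (μ1 μ2 : Fin n × Fin m → ℝ)
    (hμ1 : ∀ p, 0 ≤ μ1 p) (hμ2 : ∀ p, 0 ≤ μ2 p)
    (hs1 : ∑ p, μ1 p = 1) (hs2 : ∑ p, μ2 p = 1)
    (σ : ℝ) (hσ : 0 < σ)
    (y ybar : ℕ → ((Fin n × Fin m) ⊕ (Fin n × Fin m) ⊕ Fin (n * m - 1)) → ℝ)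
    (z zbar x xbar : ℕ → ((Fin n × Fin m × Fin m) ⊕ (Fin n × Fin n × Fin m)) → ℝ)
    -- Step 1:  ȳᵏ = (A Aᵀ)⁻¹ ( b/σ − A (xᵏ/σ + zᵏ − c) )
    (hy : ∀ k, ybar k = (Amat m n hm * (Amat m n hm)ᵀ)⁻¹.mulVec
      (σ⁻¹ • bvec m n hm μ1 μ2 -
        (Amat m n hm).mulVec (σ⁻¹ • x k + z k - cvec m n)))
    -- Step 2:  x̄ᵏ = xᵏ + σ (Aᵀ ȳᵏ + zᵏ − c)
    (hx : ∀ k, xbar k = x k + σ • ((Amat m n hm)ᵀ.mulVec (ybar k) + z k - cvec m n))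
    -- Step 3:  z̄ᵏ = Π_{ℝ₊}( c − Aᵀ ȳᵏ − x̄ᵏ/σ )
    (hz : ∀ k, zbar k = fun i =>
      max (cvec m n i - (Amat m n hm)ᵀ.mulVec (ybar k) i - xbar k i / σ) 0)
    -- Step 4 (Halpern step):  wᵏ⁺¹ = (1/(k+2)) w⁰ + ((k+1)/(k+2)) (2 w̄ᵏ − wᵏ)
    (hky : ∀ k, y (k + 1) =
      (1 / ((k : ℝ) + 2)) • y 0 + (((k : ℝ) + 1) / ((k : ℝ) + 2)) • ((2 : ℝ) • ybar k - y k))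
    (hkz : ∀ k, z (k + 1) =
      (1 / ((k : ℝ) + 2)) • z 0 + (((k : ℝ) + 1) / ((k : ℝ) + 2)) • ((2 : ℝ) • zbar k - z k))
    (hkx : ∀ k, x (k + 1) =
      (1 / ((k : ℝ) + 2)) • x 0 + (((k : ℝ) + 1) / ((k : ℝ) + 2)) • ((2 : ℝ) • xbar k - x k))
    -- `w* = (y*, z*, x*)` is the limit point of `{w̄ᵏ}`, which is a KKT point
    (ystar : ((Fin n × Fin m) ⊕ (Fin n × Fin m) ⊕ Fin (n * m - 1)) → ℝ)
    (zstar xstar : ((Fin n × Fin m × Fin m) ⊕ (Fin n × Fin n × Fin m)) → ℝ)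
    (hlim : Tendsto (fun k => (ybar k, zbar k, xbar k)) atTop (𝓝 (ystar, zstar, xstar)))
    (hKKT1 : (Amat m n hm)ᵀ.mulVec ystar + zstar = cvec m n)
    (hKKT2 : (Amat m n hm).mulVec xstar = bvec m n hm μ1 μ2)
    (hKKT3 : ∀ i, 0 ≤ xstar i) (hKKT4 : ∀ i, 0 ≤ zstar i)
    (hKKT5 : xstar ⬝ᵥ zstar = 0) :
    ∀ ε : ℝ, 0 < ε → ∀ k : ℕ,
      (1 / ε) * ((1 + σ) / σ) *
          (Real.sqrt (∑ i, (x 0 i - xstar i) ^ 2) +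
            σ * Real.sqrt (∑ i, (z 0 i - zstar i) ^ 2)) ≤ (k : ℝ) + 1 →
      Real.sqrt
          ((∑ i, (bvec m n hm μ1 μ2 i - (Amat m n hm).mulVec (xbar k) i) ^ 2) +
           (∑ i, (zbar k i - max (zbar k i - xbar k i) 0) ^ 2) +
           (∑ i, (cvec m n i - (Amat m n hm)ᵀ.mulVec (ybar k) i - zbar k i) ^ 2)) ≤ ε := by
  intro ε hε k hk
  have hσ' : σ ≠ 0 := ne_of_gt hσ
  have hdet : IsUnit ((Amat m n hm * (Amat m n hm)ᵀ).det) := amat_isUnit_det m n hm hn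
  set B := Amat m n hm with hBdef
  set c := cvec m n with hcdef
  set b := bvec m n hm μ1 μ2 with hbdef
  set K := B * Bᵀ with hKdef
  have hKK : K * K⁻¹ = 1 := Matrix.mul_nonsing_inv _ hdet
  have hKK' : K⁻¹ * K = 1 := Matrix.nonsing_inv_mul _ hdet
  set Pm := Bᵀ * K⁻¹ * B with hPmdef
  have e1 : (B * Bᵀ) * (K⁻¹ * B) = B := by
    rw [← hKdef, ← Matrix.mul_assoc, hKK, Matrix.one_mul]
  have hPm2 : Pm * Pm = Pm := by
    calc Pm * Pm = Bᵀ * K⁻¹ * ((B * Bᵀ) * (K⁻¹ * B)) := by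
          simp only [hPmdef, Matrix.mul_assoc]
      _ = Pm := by rw [e1, hPmdef, Matrix.mul_assoc]
  have hKt : Kᵀ = K := by rw [hKdef, Matrix.transpose_mul, Matrix.transpose_transpose]
  have hKit : (K⁻¹)ᵀ = K⁻¹ := by rw [Matrix.transpose_nonsing_inv, hKt]
  have hPmt : Pmᵀ = Pm := by
    rw [hPmdef, Matrix.transpose_mul, Matrix.transpose_mul, Matrix.transpose_transpose,
      hKit, ← Matrix.mul_assoc]
  have hPmBt : Pm * Bᵀ = Bᵀ := by
    rw [hPmdef, Matrix.mul_assoc, ← hKdef, Matrix.mul_assoc, hKK', Matrix.mul_one]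
  set M := (2:ℝ) • Pm - 1 with hMdef
  have hMt : Mᵀ = M := by
    rw [hMdef, Matrix.transpose_sub, Matrix.transpose_smul, hPmt, Matrix.transpose_one]
  have hMM : M * M = 1 := by
    rw [hMdef, Matrix.sub_mul, Matrix.mul_sub, Matrix.mul_sub, Matrix.smul_mul,
      Matrix.mul_smul, hPm2, Matrix.one_mul, Matrix.mul_one, smul_smul]
    norm_num
    module
  have hiso : ∀ d, ∑ i, (M.mulVec d i)^2 = ∑ i, d i^2 := by
    intro d
    have h1 : (M.mulVec d) ⬝ᵥ (M.mulVec d) = d ⬝ᵥ d := by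
      rw [Matrix.dotProduct_mulVec, ← Matrix.mulVec_transpose, hMt,
        Matrix.mulVec_mulVec, hMM, Matrix.one_mulVec]
    simpa [dotProduct, pow_two] using h1
  -- vector sequences
  set vf : ℕ → _ → ℝ := fun k i => σ⁻¹ * x k i + z k i with hvfdef
  set vbf : ℕ → _ → ℝ := fun k i => σ⁻¹ * xbar k i + zbar k i with hvbfdef
  set vs : _ → ℝ := fun i => σ⁻¹ * xstar i + zstar i with hvsdef
  set ef : _ → ℝ := (2:ℝ) • (c - Pm.mulVec c - (Bᵀ * K⁻¹).mulVec (σ⁻¹ • b)) with hefdef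
  have hvfc : ∀ k, σ⁻¹ • x k + z k - c = vf k - c := by
    intro k; funext i; simp [hvfdef]
  have hybar : ∀ k', Bᵀ.mulVec (ybar k') =
      (Bᵀ * K⁻¹).mulVec (σ⁻¹ • b) - Pm.mulVec (vf k') + Pm.mulVec c := by
    intro k'
    rw [hy k', hvfc k', Matrix.mulVec_mulVec, Matrix.mulVec_sub (Bᵀ * K⁻¹),
      Matrix.mulVec_mulVec, ← hPmdef, Matrix.mulVec_sub Pm]
    module
  have hwk : ∀ k', (2:ℝ) • (c - Bᵀ.mulVec (ybar k')) - vf k' = M.mulVec (vf k') + ef := by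
    intro k'
    rw [hybar k', hMdef, Matrix.sub_mulVec, Matrix.smul_mulVec, Matrix.one_mulVec,
      hefdef]
    module
  -- pointwise identities
  have hxbp : ∀ k' i, σ⁻¹ * xbar k' i = vf k' i - (c i - (Bᵀ.mulVec (ybar k')) i) := by
    intro k' i
    rw [hx k']
    simp only [Pi.add_apply, Pi.smul_apply, Pi.sub_apply, smul_eq_mul, hvfdef]
    field_simp
    ring
  have hzbp : ∀ k' i,
      zbar k' i = max (2 * (c i - (Bᵀ.mulVec (ybar k')) i) - vf k' i) 0 := by
    intro k' i
    rw [hz k']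
    simp only []
    congr 1
    have h1 : xbar k' i / σ = σ⁻¹ * xbar k' i := by field_simp
    rw [h1, hxbp k' i]
    ring
  have hNA : ∀ k' i, 2 * vbf k' i - vf k' i = |(M.mulVec (vf k')) i + ef i| := by
    intro k' i
    have h2 : 2 * (c i - (Bᵀ.mulVec (ybar k')) i) - vf k' i
        = (M.mulVec (vf k')) i + ef i := by
      have := congrFun (hwk k') i
      simpa [Pi.add_apply, Pi.sub_apply, Pi.smul_apply, smul_eq_mul] using this
    rw [← h2, ← two_max_sub]
    rw [show vbf k' i = σ⁻¹ * xbar k' i + zbar k' i from rfl, hxbp k' i, hzbp k' i]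
    ring
  have hres3 : ∀ k' i, c i - (Bᵀ.mulVec (ybar k')) i - zbar k' i = vf k' i - vbf k' i := by
    intro k' i
    rw [show vbf k' i = σ⁻¹ * xbar k' i + zbar k' i from rfl, hxbp k' i]
    ring
  have hres1 : ∀ k', B.mulVec (xbar k') = b := by
    intro k'
    rw [hx k', hy k']
    simp only [Matrix.mulVec_add, Matrix.mulVec_sub, Matrix.mulVec_smul, Matrix.mulVec_mulVec]
    have hBK1 : B * (Bᵀ * K⁻¹) = 1 := by rw [← Matrix.mul_assoc, ← hKdef, hKK]
    have hBKB : B * (Bᵀ * (K⁻¹ * B)) = B := by rw [← Matrix.mul_assoc B Bᵀ, e1]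
    simp only [hBK1, hBKB, Matrix.one_mulVec]
    match_scalars <;> field_simp <;> ring
  -- fixed point
  have hzs : zstar = c - Bᵀ.mulVec ystar := by rw [← hKKT1]; abel
  have hvs' : vs = σ⁻¹ • xstar + zstar := by funext i; simp [hvsdef]
  have hstar : M.mulVec vs + ef = (2:ℝ) • zstar - vs := by
    have h1 : Pm.mulVec xstar = (Bᵀ * K⁻¹).mulVec b := by
      rw [hPmdef, Matrix.mul_assoc, ← Matrix.mulVec_mulVec, ← Matrix.mulVec_mulVec, hKKT2,
        Matrix.mulVec_mulVec]
    have h2 : Pm.mulVec zstar = Pm.mulVec c - Bᵀ.mulVec ystar := by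
      rw [hzs, Matrix.mulVec_sub, Matrix.mulVec_mulVec, hPmBt]
    rw [hMdef, Matrix.sub_mulVec, Matrix.smul_mulVec, Matrix.one_mulVec, hvs',
      Matrix.mulVec_add, Matrix.mulVec_smul, h1, h2, hefdef, hzs]
    simp only [Matrix.mulVec_smul]
    module
  have hcomp : ∀ i, xstar i * zstar i = 0 := by
    intro i
    have h0 : ∑ j, xstar j * zstar j = 0 := hKKT5
    have := (Finset.sum_eq_zero_iff_of_nonneg
      (fun j _ => mul_nonneg (hKKT3 j) (hKKT4 j))).mp h0 i (Finset.mem_univ i)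
    exact this
  have hfixpt : ∀ i, |(M.mulVec vs) i + ef i| = vs i := by
    intro i
    have h := congrFun hstar i
    simp only [Pi.add_apply, Pi.sub_apply, Pi.smul_apply, smul_eq_mul] at h
    rw [h]
    have e : 2 * zstar i - vs i = zstar i - σ⁻¹ * xstar i := by
      rw [hvsdef]; ring
    rw [e, hvsdef]
    simp only []
    have hxi : 0 ≤ σ⁻¹ * xstar i := mul_nonneg (inv_nonneg.mpr hσ.le) (hKKT3 i)
    rcases mul_eq_zero.mp (hcomp i) with h0 | h0
    · rw [h0, mul_zero, sub_zero, zero_add, abs_of_nonneg (hKKT4 i)]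
    · rw [h0, add_zero, zero_sub, abs_neg, abs_of_nonneg hxi]
  -- Euclidean space setup
  have hnormE : ∀ f : EuclideanSpace ℝ ((Fin n × Fin m × Fin m) ⊕ (Fin n × Fin n × Fin m)),
      ‖f‖ = Real.sqrt (∑ i, (f i)^2) := by
    intro f; rw [EuclideanSpace.norm_eq]; simp [Real.norm_eq_abs, sq_abs]
  set NN : EuclideanSpace ℝ ((Fin n × Fin m × Fin m) ⊕ (Fin n × Fin n × Fin m)) →
      EuclideanSpace ℝ ((Fin n × Fin m × Fin m) ⊕ (Fin n × Fin n × Fin m)) :=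
    fun a => WithLp.toLp 2 (fun i => |(M.mulVec a) i + ef i|) with hNNdef
  set vE : ℕ → EuclideanSpace ℝ ((Fin n × Fin m × Fin m) ⊕ (Fin n × Fin n × Fin m)) :=
    fun k' => WithLp.toLp 2 (fun i => vf k' i) with hvEdef
  set vsE : EuclideanSpace ℝ ((Fin n × Fin m × Fin m) ⊕ (Fin n × Fin n × Fin m)) :=
    WithLp.toLp 2 (fun i => vs i) with hvsEdef
  have hNNnonexp : ∀ a b' : EuclideanSpace ℝ ((Fin n × Fin m × Fin m) ⊕ (Fin n × Fin n × Fin m)),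
      ‖NN a - NN b'‖ ≤ ‖a - b'‖ := by
    intro a b'
    rw [hnormE, hnormE]
    apply Real.sqrt_le_sqrt
    calc ∑ i, ((NN a - NN b') i)^2
        = ∑ i, (|(M.mulVec a) i + ef i| - |(M.mulVec b') i + ef i|)^2 := by
          apply Finset.sum_congr rfl; intro i _
          simp [hNNdef, PiLp.sub_apply]
      _ ≤ ∑ i, (((M.mulVec a) i + ef i) - ((M.mulVec b') i + ef i))^2 :=
          Finset.sum_le_sum fun i _ => abs_sub_abs_sq_le _ _
      _ = ∑ i, ((M.mulVec (fun j => a j - b' j)) i)^2 := by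
          apply Finset.sum_congr rfl; intro i _
          congr 1
          simp [Matrix.mulVec, dotProduct, mul_sub, Finset.sum_sub_distrib]
      _ = ∑ i, ((a - b') i)^2 := by
          rw [hiso]
          apply Finset.sum_congr rfl; intro i _
          simp [PiLp.sub_apply]
  have hrecE : ∀ k' : ℕ, vE (k' + 1) =
      (1 / ((k' : ℝ) + 2)) • vE 0 + (((k' : ℝ) + 1) / ((k' : ℝ) + 2)) • NN (vE k') := by
    intro k'
    ext i
    have hNi : NN (vE k') i = 2 * vbf k' i - vf k' i := (hNA k' i).symm
    simp only [PiLp.add_apply, PiLp.smul_apply, smul_eq_mul, hNi]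
    show σ⁻¹ * x (k' + 1) i + z (k' + 1) i = _
    rw [hkx k', hkz k']
    simp only [Pi.add_apply, Pi.smul_apply, Pi.sub_apply, smul_eq_mul]
    show _ = 1 / ((k' : ℝ) + 2) * (σ⁻¹ * x 0 i + z 0 i) + _
    ring
  have hfixE : NN vsE = vsE := by
    ext i
    exact hfixpt i
  have halp := halpern_rate' NN hNNnonexp vE hrecE vsE hfixE k
  -- translate the Halpern bound
  set S3 : ℝ := ∑ i, (vf k i - vbf k i)^2 with hS3def
  have hS3nonneg : 0 ≤ S3 := Finset.sum_nonneg fun i _ => sq_nonneg _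
  have hGapp : ∀ i, (vE k - NN (vE k)) i = 2 * (vf k i - vbf k i) := by
    intro i
    have hNi : NN (vE k) i = 2 * vbf k i - vf k i := (hNA k i).symm
    simp only [PiLp.sub_apply, hNi]
    show vf k i - _ = _
    ring
  have hnormG : ‖vE k - NN (vE k)‖ = 2 * Real.sqrt S3 := by
    rw [hnormE]
    have h4 : ∑ i, ((vE k - NN (vE k)) i)^2 = 4 * S3 := by
      rw [hS3def, Finset.mul_sum]
      apply Finset.sum_congr rfl; intro i _
      rw [hGapp i]; ring
    rw [h4, show (4:ℝ) * S3 = 2^2 * S3 by norm_num,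
      Real.sqrt_mul (by positivity) S3, Real.sqrt_sq (by norm_num)]
  have hk1 : (0:ℝ) < (k:ℝ) + 1 := by positivity
  have hsqS3 : Real.sqrt S3 ≤ ‖vE 0 - vsE‖ / ((k:ℝ) + 1) := by
    rw [hnormG] at halp
    rw [div_eq_inv_mul] at halp ⊢
    linarith [halp]
  -- bound on the initial distance
  set X : ℝ := Real.sqrt (∑ i, (x 0 i - xstar i)^2) with hXdef
  set Z : ℝ := Real.sqrt (∑ i, (z 0 i - zstar i)^2) with hZdef
  have hXnn : 0 ≤ X := Real.sqrt_nonneg _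
  have hZnn : 0 ≤ Z := Real.sqrt_nonneg _
  have hv0 : ‖vE 0 - vsE‖ ≤ σ⁻¹ * X + Z := by
    set dX : EuclideanSpace ℝ ((Fin n × Fin m × Fin m) ⊕ (Fin n × Fin n × Fin m)) :=
      WithLp.toLp 2 (fun i => x 0 i - xstar i) with hdX
    set dZ : EuclideanSpace ℝ ((Fin n × Fin m × Fin m) ⊕ (Fin n × Fin n × Fin m)) :=
      WithLp.toLp 2 (fun i => z 0 i - zstar i) with hdZ
    have hsplit : vE 0 - vsE = σ⁻¹ • dX + dZ := by
      ext i
      simp only [PiLp.sub_apply, PiLp.add_apply, PiLp.smul_apply, smul_eq_mul, hdX, hdZ]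
      show vf 0 i - vs i = _
      rw [hvfdef, hvsdef]
      ring
    have hdXn : ‖dX‖ = X := by rw [hnormE, hXdef]
    have hdZn : ‖dZ‖ = Z := by rw [hnormE, hZdef]
    calc ‖vE 0 - vsE‖ = ‖σ⁻¹ • dX + dZ‖ := by rw [hsplit]
      _ ≤ ‖σ⁻¹ • dX‖ + ‖dZ‖ := norm_add_le _ _
      _ = σ⁻¹ * X + Z := by
          rw [norm_smul, Real.norm_eq_abs, abs_of_pos (inv_pos.mpr hσ), hdXn, hdZn]
  -- the three residual sums
  have hT1 : ∑ i, (b i - (B.mulVec (xbar k)) i)^2 = 0 := by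
    apply Finset.sum_eq_zero; intro i _
    rw [hres1 k]
    ring
  have hT2 : ∑ i, (zbar k i - max (zbar k i - xbar k i) 0)^2 ≤ σ^2 * S3 := by
    rw [hS3def, Finset.mul_sum]
    apply Finset.sum_le_sum; intro i _
    rw [← hres3 k i]
    have hxb : xbar k i = σ * (vf k i - (c i - (Bᵀ.mulVec (ybar k)) i)) := by
      have h := hxbp k i
      field_simp at h
      linarith [h]
    rw [hzbp k i, hxb]
    exact res2_bound σ (c i - (Bᵀ.mulVec (ybar k)) i) (vf k i) hσ
  have hT3 : ∑ i, (c i - (Bᵀ.mulVec (ybar k)) i - zbar k i)^2 = S3 := by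
    rw [hS3def]
    apply Finset.sum_congr rfl; intro i _
    rw [hres3 k i]
  -- final chain
  have hfinal : (1 + σ) * (σ⁻¹ * X + Z) ≤ ε * ((k:ℝ) + 1) := by
    have e2 : ε * (1 / ε * ((1 + σ) / σ) * (X + σ * Z)) = (1 + σ) * (σ⁻¹ * X + Z) := by
      field_simp
    calc (1 + σ) * (σ⁻¹ * X + Z) = ε * (1 / ε * ((1 + σ) / σ) * (X + σ * Z)) := e2.symm
      _ ≤ ε * ((k:ℝ) + 1) := mul_le_mul_of_nonneg_left hk hε.le
  calc Real.sqrt ((∑ i, (b i - (B.mulVec (xbar k)) i)^2) +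
          (∑ i, (zbar k i - max (zbar k i - xbar k i) 0)^2) +
          (∑ i, (c i - (Bᵀ.mulVec (ybar k)) i - zbar k i)^2))
      ≤ Real.sqrt ((1 + σ)^2 * S3) := by
        apply Real.sqrt_le_sqrt
        rw [hT1, hT3]
        nlinarith [hT2, hS3nonneg, mul_nonneg hσ.le hS3nonneg]
    _ = (1 + σ) * Real.sqrt S3 := by
        rw [Real.sqrt_mul (by positivity) S3, Real.sqrt_sq (by positivity)]
    _ ≤ (1 + σ) * (‖vE 0 - vsE‖ / ((k:ℝ) + 1)) :=
        mul_le_mul_of_nonneg_left hsqS3 (by positivity)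
    _ ≤ (1 + σ) * ((σ⁻¹ * X + Z) / ((k:ℝ) + 1)) := by
        gcongr
    _ ≤ ε := by
        rw [mul_div_assoc', div_le_iff₀ hk1]
        exact hfinal
end
end

section
/- Let m ≥ 1 and n ≥ 1 be integers and M = mn. Define Ê₁ = I_n ⊗ ( (m+n) I_m − 1_m 1_mᵀ ), Ê₁⁻¹ = I_n ⊗ (1/(m+n)) ( I_m + (1/n) 1_m 1_mᵀ ), Q = ((n−1)/n) I_m + (1/n) Ī_mᵀ Ī_m with Ī_m = [I_{m−1}, 0_{m−1}], Ẽ₁ = Ê₁ − (1_n 1_nᵀ) ⊗ Q, and Ŵ = −diag( (1/m) I_{m−1}, (1/(m+1))(1 − 1/n) ) − (1/w) d dᵀ, where d = ( (1/m) 1_{m−1}; (1/(m+1))(1 − 1/n) ) ∈ ℝ^m and w = 1/m − (1/(m+1))(1 − 1/n). Then Ẽ₁ · [ Ê₁⁻¹ − Ê₁⁻¹ ( (1_n 1_nᵀ) ⊗ ((m+n) Ŵ) ) Ê₁⁻¹ ] = I_M; i.e., Ẽ₁ is invertible with Ẽ₁⁻¹ = Ê₁⁻¹ − Ê₁⁻¹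 ( (1_n 1_nᵀ) ⊗ ((m+n) Ŵ) ) Ê₁⁻¹. -/
open Matrix Finset Kronecker

noncomputable section

/-- The `m × m` all-ones matrix `1ₘ 1ₘᵀ`. -/
def Jmat (m : ℕ) : Matrix (Fin m) (Fin m) ℝ := Matrix.of fun _ _ => 1

/-- `Īₘ = [I_{m−1}, 0_{m−1}] ∈ ℝ^{(m−1) × m}`. -/
def Ibar (m : ℕ) : Matrix (Fin (m - 1)) (Fin m) ℝ :=
  Matrix.of fun a b => if (a : ℕ) = (b : ℕ) then 1 else 0

lemma Jmat_mul_Jmat (k : ℕ) : Jmat k * Jmat k = (k : ℝ) • Jmat k := by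
  ext i j; simp [Jmat, Matrix.mul_apply]

lemma IbarT_mul (m : ℕ) :
    (Ibar m)ᵀ * Ibar m =
      Matrix.diagonal (fun a : Fin m => if (a : ℕ) < m - 1 then (1 : ℝ) else 0) := by
  ext a b
  rw [Matrix.mul_apply, Matrix.diagonal_apply]
  simp only [Matrix.transpose_apply, Ibar, Matrix.of_apply]
  by_cases hab : a = b
  · subst hab
    simp only [if_pos rfl]
    by_cases ha : (a : ℕ) < m - 1
    · rw [if_pos ha]
      have : ∀ c : Fin (m - 1),
          ((if (c : ℕ) = (a : ℕ) then (1:ℝ) else 0) * (if (c : ℕ) = (a : ℕ) then (1:ℝ) else 0))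
            = if c = (⟨(a : ℕ), ha⟩ : Fin (m - 1)) then 1 else 0 := by
        intro c
        by_cases hc : (c : ℕ) = (a : ℕ)
        · rw [if_pos hc, if_pos (Fin.ext hc), one_mul]
        · rw [if_neg hc, if_neg (fun h => hc (by rw [h]))]
          ring
      rw [Finset.sum_congr rfl fun c _ => this c, Finset.sum_ite_eq' _ _ _]
      simp
    · rw [if_neg ha]
      apply Finset.sum_eq_zero
      intro c _
      rw [if_neg (fun h : (c:ℕ) = (a:ℕ) => ha (h ▸ c.isLt)), zero_mul]
  · rw [if_neg hab]
    apply Finset.sum_eq_zero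
    intro c _
    by_cases hc : (c : ℕ) = (a : ℕ)
    · rw [if_neg (fun h : (c:ℕ) = (b:ℕ) => hab (Fin.ext (hc ▸ h)))]
      ring
    · rw [if_neg hc, zero_mul]

/-- Sherman–Morrison–Woodbury inversion of `Ẽ₁`.
With `Ê₁ = Iₙ ⊗ ((m+n) Iₘ − 1ₘ1ₘᵀ)`, `Ê₁⁻¹ = Iₙ ⊗ (1/(m+n))(Iₘ + (1/n) 1ₘ1ₘᵀ)`,
`Q = ((n−1)/n) Iₘ + (1/n) Īₘᵀ Īₘ`, `Ẽ₁ = Ê₁ − (1ₙ1ₙᵀ) ⊗ Q`, and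
`Ŵ = −diag((1/m) I_{m−1}, (1/(m+1))(1 − 1/n)) − (1/w) d dᵀ`
(where `d = ((1/m) 1_{m−1}; (1/(m+1))(1 − 1/n))` and `w = 1/m − (1/(m+1))(1 − 1/n)`),
one has `Ẽ₁ ⬝ [Ê₁⁻¹ − Ê₁⁻¹ ((1ₙ1ₙᵀ) ⊗ ((m+n) Ŵ)) Ê₁⁻¹] = I_M`, i.e. `Ẽ₁` is invertible
with that matrix as its inverse. -/
theorem stmt18 (m n : ℕ) (hm : 0 < m) (hn : 0 < n)
    (E1hat E1hatInv Etilde : Matrix (Fin n × Fin m) (Fin n × Fin m) ℝ)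
    (hE1hat : E1hat = (1 : Matrix (Fin n) (Fin n) ℝ) ⊗ₖ
      (((m : ℝ) + (n : ℝ)) • (1 : Matrix (Fin m) (Fin m) ℝ) - Jmat m))
    (hE1hatInv : E1hatInv = (1 : Matrix (Fin n) (Fin n) ℝ) ⊗ₖ
      ((1 / ((m : ℝ) + (n : ℝ))) •
        ((1 : Matrix (Fin m) (Fin m) ℝ) + (1 / (n : ℝ)) • Jmat m)))
    (Q : Matrix (Fin m) (Fin m) ℝ)
    (hQ : Q = (((n : ℝ) - 1) / (n : ℝ)) • (1 : Matrix (Fin m) (Fin m) ℝ) +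
      (1 / (n : ℝ)) • ((Ibar m)ᵀ * Ibar m))
    (hEtilde : Etilde = E1hat - (Jmat n) ⊗ₖ Q)
    (d : Fin m → ℝ)
    (hd : ∀ a, d a = if (a : ℕ) < m - 1 then 1 / (m : ℝ)
      else (1 / ((m : ℝ) + 1)) * (1 - 1 / (n : ℝ)))
    (w : ℝ)
    (hw : w = 1 / (m : ℝ) - (1 / ((m : ℝ) + 1)) * (1 - 1 / (n : ℝ)))
    (What : Matrix (Fin m) (Fin m) ℝ)
    (hWhat : What = -Matrix.diagonal d - (1 / w) • Matrix.vecMulVec d d) :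
    Etilde *
        (E1hatInv -
          E1hatInv * ((Jmat n) ⊗ₖ (((m : ℝ) + (n : ℝ)) • What)) * E1hatInv) =
      (1 : Matrix (Fin n × Fin m) (Fin n × Fin m) ℝ) ∧
    Etilde⁻¹ =
      E1hatInv - E1hatInv * ((Jmat n) ⊗ₖ (((m : ℝ) + (n : ℝ)) • What)) * E1hatInv := by
  have hm0 : (m:ℝ) ≠ 0 := by positivity
  have hn0 : (n:ℝ) ≠ 0 := by positivity
  have hm1 : (m:ℝ) + 1 ≠ 0 := by positivity
  have hmn : (m:ℝ) + (n:ℝ) ≠ 0 := by positivity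
  have hw0 : w ≠ 0 := by
    have : w = ((m:ℝ) + (n:ℝ)) / ((n:ℝ) * (m:ℝ) * ((m:ℝ) + 1)) := by
      rw [hw]; field_simp; ring
    rw [this]
    positivity
  -- the diagonal of Q
  set q : Fin m → ℝ := fun a => if (a : ℕ) < m - 1 then (1:ℝ) else ((n:ℝ) - 1) / n with hqdef
  have hq : ∀ a, q a = if (a : ℕ) < m - 1 then (1:ℝ) else ((n:ℝ) - 1) / n := fun a => rfl
  have hQdiag : Q = Matrix.diagonal q := by
    rw [hQ, IbarT_mul]
    ext a b
    simp only [Matrix.add_apply, Matrix.smul_apply, Matrix.one_apply, Matrix.diagonal_apply,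
      smul_eq_mul, hqdef]
    by_cases hab : a = b
    · subst hab
      simp only [if_pos rfl]
      by_cases ha : (a : ℕ) < m - 1
      · rw [if_pos ha, if_pos ha]; field_simp; ring
      · rw [if_neg ha, if_neg ha]; simp only [↓reduceIte, mul_one, add_zero]; field_simp; ring
    · simp [hab]
  -- sum of d
  have hsumd : ∑ a, d a = 1 - w := by
    set a0 : Fin m := ⟨m - 1, by omega⟩ with ha0
    have hd' : ∀ a : Fin m, d a = 1 / (m:ℝ) +
        (if a = a0 then (1 / ((m : ℝ) + 1)) * (1 - 1 / (n : ℝ)) - 1 / m else 0) := by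
      intro a
      rw [hd]
      by_cases h : (a : ℕ) < m - 1
      · rw [if_pos h, if_neg, add_zero]
        intro he
        rw [he] at h
        simp [ha0] at h
      · have hv : a = a0 := Fin.ext (by have := a.isLt; simp [ha0]; omega)
        rw [if_neg h, if_pos hv]; ring
    rw [Finset.sum_congr rfl fun a _ => hd' a, Finset.sum_add_distrib, Finset.sum_const,
      Finset.sum_ite_eq' _ _ _]
    simp only [Finset.mem_univ, if_pos, Finset.card_univ, Fintype.card_fin, nsmul_eq_mul, hw]
    field_simp
    ring
  -- column sums of What
  have hcol : ∀ b, ∑ c, What c b = -(d b) / w := by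
    intro b
    simp only [hWhat, Matrix.sub_apply, Matrix.neg_apply, Matrix.smul_apply,
      Matrix.vecMulVec_apply, Matrix.diagonal_apply, smul_eq_mul]
    rw [Finset.sum_sub_distrib, Finset.sum_neg_distrib, Finset.sum_ite_eq' _ _ _]
    have : ∑ c : Fin m, 1 / w * (d c * d b) = 1 / w * ((1 - w) * d b) := by
      rw [← hsumd, Finset.sum_mul, Finset.mul_sum]
    rw [this]
    simp only [Finset.mem_univ, if_pos]
    field_simp
    ring
  -- the key m × m identity
  have hkey : ((m:ℝ) + (n:ℝ)) • What + Q = (n:ℝ) • (Q * What) + Q * (Jmat m * What) := by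
    ext a b
    have hJW : (Jmat m * What) a b = -(d b) / w := by
      rw [Matrix.mul_apply, ← hcol b]
      simp [Jmat]
    have hQW : (Q * What) a b = q a * What a b := by
      rw [hQdiag, Matrix.diagonal_mul]
    have hQJW : (Q * (Jmat m * What)) a b = q a * (-(d b) / w) := by
      rw [hQdiag, Matrix.diagonal_mul, hJW]
    have hQab : Q a b = if a = b then q a else 0 := by
      rw [hQdiag, Matrix.diagonal_apply]
    rw [Matrix.add_apply, Matrix.add_apply, Matrix.smul_apply, Matrix.smul_apply, hQW, hQJW,
      hQab, smul_eq_mul, smul_eq_mul]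
    by_cases hab : a = b
    · subst hab
      have hWaa : What a a = -(d a) - 1 / w * (d a * d a) := by
        simp [hWhat, Matrix.diagonal_apply, Matrix.vecMulVec_apply]
      rw [hWaa, if_pos rfl]
      by_cases ha : (a : ℕ) < m - 1
      · rw [hq a, hd a, if_pos ha, if_pos ha]
        field_simp
        ring
      · rw [hq a, hd a, if_neg ha, if_neg ha]
        field_simp
        ring
    · have hWab : What a b = -(1 / w * (d a * d b)) := by
        simp [hWhat, Matrix.diagonal_apply, Matrix.vecMulVec_apply, hab]
      rw [hWab, if_neg hab]
      by_cases ha : (a : ℕ) < m - 1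
      · rw [hq a, hd a, if_pos ha, if_pos ha]
        field_simp
        ring
      · rw [hq a, hd a, if_neg ha, if_neg ha]
        field_simp
        ring
  -- S and T
  set T : Matrix (Fin m) (Fin m) ℝ := (1 / ((m : ℝ) + (n : ℝ))) •
      ((1 : Matrix (Fin m) (Fin m) ℝ) + (1 / (n : ℝ)) • Jmat m) with hTdef
  set S : Matrix (Fin m) (Fin m) ℝ :=
      ((m : ℝ) + (n : ℝ)) • (1 : Matrix (Fin m) (Fin m) ℝ) - Jmat m with hSdef
  have hST : S * T = 1 := by
    have hSJ : S * Jmat m = (n:ℝ) • Jmat m := by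
      rw [hSdef, Matrix.sub_mul, Matrix.smul_mul, Matrix.one_mul, Jmat_mul_Jmat]
      module
    rw [hTdef, Matrix.mul_smul, Matrix.mul_add, Matrix.mul_one, Matrix.mul_smul, hSJ, smul_smul,
      one_div_mul_cancel hn0, one_smul, hSdef, sub_add_cancel, smul_smul,
      one_div_mul_cancel hmn, one_smul]
  have hT2 : ((n:ℝ) * ((m:ℝ) + (n:ℝ))) • T
      = (n:ℝ) • (1 : Matrix (Fin m) (Fin m) ℝ) + Jmat m := by
    rw [hTdef, smul_smul]
    have h1 : (n:ℝ) * ((m:ℝ) + (n:ℝ)) * (1 / ((m:ℝ) + (n:ℝ))) = (n:ℝ) := by field_simp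
    rw [h1, smul_add, smul_smul]
    have h2 : (n:ℝ) * (1 / (n:ℝ)) = 1 := by field_simp
    rw [h2, one_smul]
  -- middle term
  have hmid : E1hatInv * ((Jmat n) ⊗ₖ (((m : ℝ) + (n : ℝ)) • What)) * E1hatInv
      = (Jmat n) ⊗ₖ (T * (((m:ℝ) + (n:ℝ)) • What) * T) := by
    rw [hE1hatInv, ← Matrix.mul_kronecker_mul, ← Matrix.mul_kronecker_mul,
      Matrix.one_mul, Matrix.mul_one]
  -- the main computation
  have hone : Etilde *
      (E1hatInv -
        E1hatInv * ((Jmat n) ⊗ₖ (((m : ℝ) + (n : ℝ)) • What)) * E1hatInv) = 1 := by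
    rw [hmid, hEtilde, hE1hat, hE1hatInv]
    have hJn : Jmat n * Jmat n = (n : ℝ) • Jmat n := Jmat_mul_Jmat n
    set X := T * (((m:ℝ) + (n:ℝ)) • What) * T with hX
    rw [Matrix.mul_sub, Matrix.sub_mul, Matrix.sub_mul,
      ← Matrix.mul_kronecker_mul, ← Matrix.mul_kronecker_mul,
      ← Matrix.mul_kronecker_mul, ← Matrix.mul_kronecker_mul,
      Matrix.one_mul, Matrix.one_mul, Matrix.mul_one, hST, hJn,
      Matrix.one_kronecker_one, Matrix.smul_kronecker, ← Matrix.kronecker_smul]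
    have hSX : S * X = (((m:ℝ) + (n:ℝ)) • What) * T := by
      rw [hX, ← Matrix.mul_assoc, ← Matrix.mul_assoc, hST, Matrix.one_mul]
    rw [hSX]
    have hQX : (n:ℝ) • (Q * X) = ((n:ℝ) • (Q * What) + Q * (Jmat m * What)) * T := by
      have e1 : (n:ℝ) • (Q * X) = Q * ((((n:ℝ) * ((m:ℝ) + (n:ℝ))) • T) * (What * T)) := by
        rw [hX]
        simp only [Matrix.mul_smul, Matrix.smul_mul, smul_smul, Matrix.mul_assoc]
      rw [e1, hT2]
      simp only [Matrix.add_mul, Matrix.mul_add, Matrix.smul_mul, Matrix.mul_smul,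
        Matrix.one_mul, Matrix.mul_assoc]
    rw [hQX, ← hkey, Matrix.add_mul, Matrix.smul_mul, Matrix.kronecker_add]
    abel
  exact ⟨hone, Matrix.inv_eq_right_inv hone⟩
end
end

section
/- Let m, n be positive integers, M = mn, M₃ = 3M − 1, and let A ∈ ℝ^{M₃×N} be the constraint matrix of the reduced OT model. Given R = (R₁; R₂; R₃) ∈ ℝ^M × ℝ^M × ℝ^{M−1} with block decompositions R₁ = (R₁¹; …; R₁ⁿ), R₂ = (R₂¹; …; R₂ⁿ) (each R₁ʲ, R₂ʲ ∈ ℝ^m) and R₃ = (R₃¹; …; R₃ⁿ) (R₃ʲ ∈ ℝ^m for j < n and R₃ⁿ ∈ ℝ^{m−1}), define for j = 1, …, n: R̃₁ʲ = R₁ʲ + (1/n)(1_mᵀ R₁ʲ) 1_m, R̃₂ʲ = −(1/m + 1/n)(1_mᵀ R₂ʲ) 1_m, R̃₃ = (1/n)( ∑_{j'=1}^{n−1} R₃^{j'} + Ī_mᵀ R₃ⁿ ) + (1/n²)(1_{M−1}ᵀ R₃) 1_m, and ŷ₁ʲ = (1/(m+n))( R̃₁ʲ + R̃₂ʲ + R̃₃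 ). Define ŷ₁ᵃ = ( I_m + (1/n) 1_m 1_mᵀ ) Ŵ ∑_{j=1}^n ŷ₁ʲ, where Ŵ = −diag( (1/m) I_{m−1}, (1/(m+1))(1 − 1/n) ) − (1/w) d dᵀ with d = ( (1/m) 1_{m−1}; (1/(m+1))(1 − 1/n) ) and w = 1/m − (1/(m+1))(1 − 1/n). Finally define y = (y₁; y₂; y₃) by y₁ʲ = ŷ₁ʲ − ŷ₁ᵃ for j = 1, …, n; y₂ʲ = (1/m)( R₂ʲ − (1_mᵀ y₁ʲ) 1_m ) for j = 1, …, n; y₃ʲ = (1/n)( R₃ʲ + ∑_{j'=1}^n y₁^{j'} ) for j = 1, …, n−1; and y₃ⁿ = (1/n)( R₃ⁿ + Ī_m ∑_{j'=1}^n y₁^{j'} ). Then A Aᵀ y = R. -/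
open Matrix Finset Filter Topology

noncomputable section

lemma sum_pad (m n : ℕ) (hm : 0 < m) (hn : 0 < n) (f : Fin (n*m-1) → ℝ) :
    (∑ l : Fin n, ∑ k : Fin m,
      (if h : (k:ℕ) + m * (l:ℕ) < n*m-1 then f ⟨_, h⟩ else 0)) = ∑ r, f r := by
  have hNM : 0 < n * m := Nat.mul_pos hn hm
  have e : n*m = (n*m-1) + 1 := (Nat.succ_pred_eq_of_pos hNM).symm
  set F : Fin (n*m) → ℝ := fun r => if h : (r:ℕ) < n*m-1 then f ⟨r, h⟩ else 0 with hF
  have h1 : (∑ r : Fin (n*m), F r) = ∑ r : Fin (n*m-1), f r := by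
    rw [← Fintype.sum_equiv (finCongr e.symm) (fun r => F (finCongr e.symm r)) F (fun _ => rfl),
      Fin.sum_univ_castSucc]
    have hlast : F (finCongr e.symm (Fin.last _)) = 0 := by
      simp [hF, finCongr, Fin.last]
    rw [hlast, add_zero]
    refine Finset.sum_congr rfl fun r _ => ?_
    have : ((finCongr e.symm r.castSucc : Fin (n*m)) : ℕ) = (r : ℕ) := rfl
    simp [hF, this, r.2]
  rw [← h1, ← Equiv.sum_comp finProdFinEquiv F, Fintype.sum_prod_type]
  refine Finset.sum_congr rfl fun l _ => Finset.sum_congr rfl fun k _ => ?_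
  have hv : ((finProdFinEquiv (l, k) : Fin (n*m)) : ℕ) = (k:ℕ) + m * (l:ℕ) := by
    simp [finProdFinEquiv]
  symm
  simp only [hF]
  simp only [hv]

lemma rowIdx_eq_iff (m n : ℕ) (hm : 0 < m) (x : Fin (n*m-1)) (l : Fin n) (k : Fin m) :
    ((rowIdx m n hm x).1 = l ∧ (rowIdx m n hm x).2 = k) ↔ (x:ℕ) = (k:ℕ) + m * (l:ℕ) := by
  simp only [rowIdx, Fin.ext_iff]
  constructor
  · rintro ⟨h1, h2⟩
    rw [← Nat.div_add_mod (x:ℕ) m, h1, h2, Nat.add_comm]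
  · intro h
    constructor
    · show (x:ℕ) / m = l
      rw [h, Nat.add_mul_div_left _ _ hm, Nat.div_eq_of_lt k.2, Nat.zero_add]
    · show (x:ℕ) % m = k
      rw [h, Nat.add_mul_mod_self_left, Nat.mod_eq_of_lt k.2]

lemma indicator_sum (m n : ℕ) (hm : 0 < m) (l : Fin n) (k : Fin m) (y3 : Fin (n*m-1) → ℝ) :
    (∑ x : Fin (n * m - 1), if (rowIdx m n hm x).1 = l ∧ (rowIdx m n hm x).2 = k then y3 x else 0)
    = if h : (k:ℕ) + m * (l:ℕ) < n * m - 1 then y3 ⟨_, h⟩ else 0 := by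
  by_cases h : (k:ℕ) + m * (l:ℕ) < n * m - 1
  · rw [dif_pos h]
    rw [show (∑ x : Fin (n*m-1), if (rowIdx m n hm x).1 = l ∧ (rowIdx m n hm x).2 = k then y3 x else 0)
        = ∑ x : Fin (n*m-1), if x = ⟨(k:ℕ) + m * (l:ℕ), h⟩ then y3 x else 0 from
      Finset.sum_congr rfl fun x _ => if_congr (by rw [rowIdx_eq_iff, Fin.ext_iff]) rfl rfl]
    simp
  · rw [dif_neg h]
    refine Finset.sum_eq_zero fun x _ => ?_
    rw [if_neg]
    intro hc
    exact h ((rowIdx_eq_iff m n hm x l k).mp hc ▸ x.2)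

lemma sum_split (m : ℕ) (hm : 0 < m) (u v : ℝ) :
    (∑ a : Fin m, if (a:ℕ) < m-1 then u else v) = (m-1 : ℕ) * u + v := by
  have e : m = (m-1) + 1 := (Nat.succ_pred_eq_of_pos hm).symm
  rw [← Fintype.sum_equiv (finCongr e.symm)
      (fun a => if ((finCongr e.symm a : Fin m):ℕ) < m-1 then u else v)
      (fun a => if (a:ℕ) < m-1 then u else v) (fun _ => rfl),
    Fin.sum_univ_castSucc]
  have h1 : ∀ a : Fin (m-1), ((finCongr e.symm a.castSucc : Fin m) : ℕ) = (a:ℕ) := fun _ => rfl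
  have h2 : ((finCongr e.symm (Fin.last (m-1)) : Fin m) : ℕ) = m-1 := rfl
  simp only [h1, h2]
  rw [if_neg (lt_irrefl _)]
  rw [Finset.sum_congr rfl (fun a (_ : a ∈ univ) => if_pos a.2), Finset.sum_const,
    Finset.card_univ, Fintype.card_fin, nsmul_eq_mul]

lemma valid_iff (m n : ℕ) (hm : 0 < m) (hn : 0 < n) (l : Fin n) (k : Fin m) :
    ((k:ℕ) + m * (l:ℕ) < n*m-1) ↔ ¬((k:ℕ) = m-1 ∧ (l:ℕ) = n-1) := by
  have hk := k.2
  have hl := l.2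
  have e : m * (n - 1) + m = m * n := by
    rw [← Nat.mul_succ]; congr 1; omega
  have e2 : n * m = m * n := Nat.mul_comm n m
  constructor
  · rintro h ⟨h1, h2⟩
    rw [h1, h2] at h
    omega
  · intro h
    rcases Nat.lt_or_ge (l:ℕ) (n-1) with hl' | hl'
    · have h3 : m * ((l:ℕ)+1) ≤ m * (n-1) := Nat.mul_le_mul_left m (by omega)
      rw [Nat.mul_succ] at h3
      omega
    · have hln : (l:ℕ) = n-1 := by omega
      have hkm : (k:ℕ) < m-1 := by
        rcases Nat.lt_or_ge (k:ℕ) (m-1) with h' | h'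
        · exact h'
        · exact absurd ⟨by omega, hln⟩ h
      rw [hln]
      omega

set_option maxHeartbeats 2000000 in
/-- Proposition 4 of the paper: explicit closed-form solution of
the normal equations `A Aᵀ y = R` in linear time.
Given `R = (R₁; R₂; R₃)` with blocks `R₁ʲ, R₂ʲ ∈ ℝᵐ` (`j = 1, …, n`) and
`R₃ = (R₃¹; …; R₃ⁿ)` (`R₃ʲ ∈ ℝᵐ` for `j < n`, `R₃ⁿ ∈ ℝ^{m−1}`; here encoded as a
vector on `Fin (nm − 1)` whose `(l,k)`-entry is at index `k + m·l`), the vector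
`y = (y₁; y₂; y₃)` built from the formulas of Proposition 4 solves `A Aᵀ y = R`. -/
theorem stmt19 (m n : ℕ) (hm : 0 < m) (hn : 0 < n)
    (R1 R2 : Fin n → Fin m → ℝ) (R3 : Fin (n * m - 1) → ℝ)
    -- the blocks of `R₃`, with the last block `Īₘᵀ R₃ⁿ` padded by a zero:
    (R3pad : Fin n → Fin m → ℝ)
    (hR3pad : ∀ l k, R3pad l k =
      if h : (k : ℕ) + m * (l : ℕ) < n * m - 1 then R3 ⟨(k : ℕ) + m * (l : ℕ), h⟩ else 0)
    -- `R̃₃ = (1/n) (∑_{j'=1}^{n−1} R₃^{j'} + Īₘᵀ R₃ⁿ) + (1/n²) (1_{M−1}ᵀ R₃) 1ₘ`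
    (Rt3 : Fin m → ℝ)
    (hRt3 : ∀ i, Rt3 i = (1 / (n : ℝ)) * (∑ l, R3pad l i) +
      (1 / (n : ℝ) ^ 2) * (∑ r, R3 r))
    -- `ŷ₁ʲ = (1/(m+n)) (R̃₁ʲ + R̃₂ʲ + R̃₃)` with `R̃₁ʲ = R₁ʲ + (1/n)(1ₘᵀ R₁ʲ) 1ₘ` and
    -- `R̃₂ʲ = −(1/m + 1/n)(1ₘᵀ R₂ʲ) 1ₘ`
    (yhat1 : Fin n → Fin m → ℝ)
    (hyhat1 : ∀ j i, yhat1 j i = (1 / ((m : ℝ) + (n : ℝ))) *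
      ((R1 j i + (1 / (n : ℝ)) * ∑ i', R1 j i') +
        (-(1 / (m : ℝ) + 1 / (n : ℝ)) * ∑ i', R2 j i') + Rt3 i))
    -- `d = ((1/m) 1_{m−1}; (1/(m+1))(1 − 1/n))` and `w = 1/m − (1/(m+1))(1 − 1/n)`
    (d : Fin m → ℝ)
    (hd : ∀ a, d a = if (a : ℕ) < m - 1 then 1 / (m : ℝ)
      else (1 / ((m : ℝ) + 1)) * (1 - 1 / (n : ℝ)))
    (w : ℝ)
    (hw : w = 1 / (m : ℝ) - (1 / ((m : ℝ) + 1)) * (1 - 1 / (n : ℝ)))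
    -- `Ŵ = −diag((1/m) I_{m−1}, (1/(m+1))(1 − 1/n)) − (1/w) d dᵀ`
    (What : Matrix (Fin m) (Fin m) ℝ)
    (hWhat : What = -Matrix.diagonal d - (1 / w) • Matrix.vecMulVec d d)
    -- `ŷ₁ᵃ = (Iₘ + (1/n) 1ₘ 1ₘᵀ) Ŵ ∑_{j=1}^n ŷ₁ʲ`
    (yhat1a : Fin m → ℝ)
    (hyhat1a : yhat1a =
      ((1 : Matrix (Fin m) (Fin m) ℝ) +
        (1 / (n : ℝ)) • (Matrix.of fun _ _ => (1 : ℝ))).mulVec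
        (What.mulVec (fun i => ∑ j, yhat1 j i)))
    -- `y₁ʲ = ŷ₁ʲ − ŷ₁ᵃ`,  `y₂ʲ = (1/m)(R₂ʲ − (1ₘᵀ y₁ʲ) 1ₘ)`
    (y1 y2 : Fin n → Fin m → ℝ)
    (hy1 : ∀ j i, y1 j i = yhat1 j i - yhat1a i)
    (hy2 : ∀ j i, y2 j i = (1 / (m : ℝ)) * (R2 j i - ∑ i', y1 j i'))
    -- `y₃ʲ = (1/n)(R₃ʲ + ∑_{j'} y₁^{j'})` for `j < n`, `y₃ⁿ = (1/n)(R₃ⁿ + Īₘ ∑_{j'} y₁^{j'})`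
    (y3 : Fin (n * m - 1) → ℝ)
    (hy3 : ∀ r, y3 r = (1 / (n : ℝ)) * (R3 r + ∑ j, y1 j (rowIdx m n hm r).2)) :
    (Amat m n hm * (Amat m n hm)ᵀ).mulVec
        (Sum.elim (fun p => y1 p.1 p.2) (Sum.elim (fun p => y2 p.1 p.2) y3)) =
      Sum.elim (fun p => R1 p.1 p.2) (Sum.elim (fun p => R2 p.1 p.2) R3) := by
  have hm' : (0:ℝ) < m := by exact_mod_cast hm
  have hn' : (0:ℝ) < n := by exact_mod_cast hn
  have hm0 : (m:ℝ) ≠ 0 := ne_of_gt hm'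
  have hn0 : (n:ℝ) ≠ 0 := ne_of_gt hn'
  have hw' : (0:ℝ) < w := by
    rw [hw]
    have h1 : (1:ℝ) - 1/n ≤ 1 := by
      have : (0:ℝ) ≤ 1/n := by positivity
      linarith
    have h2 : (0:ℝ) ≤ 1/((m:ℝ)+1) := by positivity
    have h3 : 1/((m:ℝ)+1) < 1/m := by
      apply one_div_lt_one_div_of_lt hm'
      linarith
    nlinarith [mul_le_of_le_one_right h2 h1]
  have hw0 : w ≠ 0 := ne_of_gt hw'
  set Y : Fin m → ℝ := fun k => ∑ j, yhat1 j k with hYdef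
  set s : ℝ := ∑ a, d a * Y a with hsdef
  have hsd : ∑ a, d a = 1 - w := by
    rw [Finset.sum_congr rfl fun a (_ : a ∈ univ) => hd a, sum_split m hm, hw,
      Nat.cast_sub hm, Nat.cast_one]
    field_simp
    ring
  have hz : ∀ k, What.mulVec Y k = -(d k * Y k) - (1/w) * (d k * s) := by
    intro k
    rw [hWhat]
    simp only [Matrix.mulVec, dotProduct, Matrix.sub_apply, Matrix.neg_apply,
      Matrix.smul_apply, Matrix.diagonal_apply, Matrix.vecMulVec_apply, smul_eq_mul,
      sub_mul, neg_mul, ite_mul, zero_mul, Finset.sum_sub_distrib, Finset.sum_neg_distrib]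
    rw [Finset.sum_ite_eq, if_pos (Finset.mem_univ k)]
    congr 1
    rw [hsdef, Finset.mul_sum, Finset.mul_sum]
    exact Finset.sum_congr rfl fun a _ => by ring
  have hzs : ∑ a, What.mulVec Y a = -(s/w) := by
    rw [Finset.sum_congr rfl fun a (_ : a ∈ univ) => hz a, Finset.sum_sub_distrib,
      Finset.sum_neg_distrib, ← Finset.mul_sum]
    rw [show (∑ a, d a * s) = (1-w) * s from by rw [← Finset.sum_mul, hsd]]
    rw [← hsdef]
    field_simp
    ring
  have hya : ∀ k, yhat1a k = What.mulVec Y k - (1/n) * (s/w) := by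
    intro k
    rw [hyhat1a]
    rw [Matrix.add_mulVec, Matrix.one_mulVec, Matrix.smul_mulVec]
    have hJ : ((Matrix.of fun (_ _ : Fin m) => (1:ℝ)) *ᵥ (What *ᵥ Y)) k = ∑ a, What.mulVec Y a := by
      simp [Matrix.mulVec, dotProduct]
    show What.mulVec Y k + ((1/(n:ℝ)) • ((Matrix.of fun _ _ => (1:ℝ)) *ᵥ (What *ᵥ Y))) k = _
    rw [Pi.smul_apply, hJ, hzs, smul_eq_mul]
    ring
  have hSA : ∑ a, yhat1a a = -(s/w) - (m:ℝ)*((1/n)*(s/w)) := by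
    rw [Finset.sum_congr rfl fun a (_ : a ∈ univ) => hya a, Finset.sum_sub_distrib, hzs,
      Finset.sum_const, Finset.card_univ, Fintype.card_fin, nsmul_eq_mul]
  have hpad : ∑ i : Fin m, ∑ l : Fin n, R3pad l i = ∑ r, R3 r := by
    rw [Finset.sum_comm]
    rw [Finset.sum_congr rfl fun l (_ : l ∈ univ) =>
      Finset.sum_congr rfl fun i (_ : i ∈ univ) => hR3pad l i]
    exact sum_pad m n hm hn R3
  have hSj : ∀ j, ∑ i, yhat1 j i =
      (1/(n:ℝ))*(∑ i, R1 j i) - (1/n)*(∑ i, R2 j i) + (1/(n:ℝ)^2)*(∑ r, R3 r) := by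
    intro j
    have expand : ∑ i, yhat1 j i = (1/((m:ℝ)+n)) * ((∑ i, R1 j i) + (m:ℝ)*((1/n) * ∑ i, R1 j i)
        + (m:ℝ)*(-(1/(m:ℝ) + 1/n) * ∑ i, R2 j i)
        + ((1/n) * (∑ i : Fin m, ∑ l : Fin n, R3pad l i) + (m:ℝ)*((1/(n:ℝ)^2) * ∑ r, R3 r))) := by
      rw [Finset.sum_congr rfl fun i (_ : i ∈ univ) => hyhat1 j i, ← Finset.mul_sum]
      congr 1
      rw [Finset.sum_add_distrib, Finset.sum_add_distrib, Finset.sum_add_distrib]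
      rw [Finset.sum_congr rfl fun i (_ : i ∈ univ) => hRt3 i, Finset.sum_add_distrib]
      simp only [Finset.sum_const, Finset.card_univ, Fintype.card_fin, nsmul_eq_mul,
        Finset.mul_sum]
    rw [expand, hpad]
    field_simp
    ring
  funext r
  rw [← Matrix.mulVec_mulVec]
  have hgA : (Amat m n hm)ᵀ *ᵥ (Sum.elim (fun p => y1 p.1 p.2) (Sum.elim (fun p => y2 p.1 p.2) y3)) =
      Sum.elim (fun c1 : Fin n × Fin m × Fin m => y1 c1.1 c1.2.1 + y2 c1.1 c1.2.2)
        (fun c2 : Fin n × Fin n × Fin m => -y1 c2.2.1 c2.2.2 +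
          (if h : ((c2.2.2:ℕ) + m * (c2.1:ℕ)) < n*m-1 then y3 ⟨_, h⟩ else 0)) := by
    funext c
    cases c with
    | inl c1 =>
        simp [Amat, Matrix.mulVec, dotProduct, Fintype.sum_sum_type,
          Fintype.sum_prod_type, ite_and]
    | inr c2 =>
        simp only [Matrix.mulVec, dotProduct, Matrix.transpose_apply, Amat, Matrix.of_apply,
          Fintype.sum_sum_type, Fintype.sum_prod_type, Sum.elim_inl, Sum.elim_inr, ite_and]
        simp only [ite_mul, one_mul, neg_mul, zero_mul, neg_one_mul]
        rw [show (∑ x : Fin (n*m-1), if (rowIdx m n hm x).1 = c2.1 then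
            if (rowIdx m n hm x).2 = c2.2.2 then y3 x else 0 else 0)
          = ∑ x : Fin (n*m-1), if (rowIdx m n hm x).1 = c2.1 ∧ (rowIdx m n hm x).2 = c2.2.2
            then y3 x else 0 from Finset.sum_congr rfl fun x _ => by rw [ite_and]]
        rw [indicator_sum]
        simp [Finset.sum_ite_eq']
  rw [hgA]
  cases r with
  | inl p =>
      show _ = R1 p.1 p.2
      simp [Amat, Matrix.mulVec, dotProduct, Fintype.sum_sum_type,
        Fintype.sum_prod_type, ite_and]
      have hdite : ∀ l : Fin n,
          (if h : (p.2:ℕ) + m*(l:ℕ) < n*m-1 then y3 ⟨(p.2:ℕ) + m*(l:ℕ), h⟩ else 0)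
          = (1/(n:ℝ)) * R3pad l p.2 +
            (if (p.2:ℕ) + m*(l:ℕ) < n*m-1 then (1/(n:ℝ)) * ∑ j', y1 j' p.2 else 0) := by
        intro l
        by_cases h : (p.2:ℕ) + m*(l:ℕ) < n*m-1
        · rw [dif_pos h, if_pos h, hy3, hR3pad, dif_pos h]
          have h2 : (rowIdx m n hm ⟨(p.2:ℕ) + m*(l:ℕ), h⟩).2 = p.2 :=
            ((rowIdx_eq_iff m n hm ⟨(p.2:ℕ) + m*(l:ℕ), h⟩ l p.2).mpr rfl).2
          rw [h2]
          ring
        · rw [dif_neg h, if_neg h, hR3pad, dif_neg h]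
          simp
      have hDsum : (∑ l : Fin n,
            if h : (p.2:ℕ) + m*(l:ℕ) < n*m-1 then y3 ⟨(p.2:ℕ) + m*(l:ℕ), h⟩ else 0)
          = (1/(n:ℝ)) * (∑ l, R3pad l p.2) +
            (if (p.2:ℕ) = m-1 then (n:ℝ)-1 else (n:ℝ)) * ((1/(n:ℝ)) * ∑ j', y1 j' p.2) := by
        rw [Finset.sum_congr rfl fun l (_ : l ∈ univ) => hdite l, Finset.sum_add_distrib,
          ← Finset.mul_sum]
        congr 1
        by_cases hk : (p.2:ℕ) = m-1
        · rw [if_pos hk]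
          rw [Finset.sum_congr rfl fun (l : Fin n) (_ : l ∈ univ) => if_congr
            (show ((p.2:ℕ) + m*(l:ℕ) < n*m-1) ↔ ((l:ℕ) < n-1) from by
              rw [valid_iff m n hm hn]
              have hl2 := l.2
              constructor
              · intro hv
                by_contra hc
                exact hv ⟨hk, by omega⟩
              · rintro hlt ⟨_, h2⟩
                omega) rfl rfl, sum_split n hn _ 0, add_zero, Nat.cast_sub hn, Nat.cast_one]
        · rw [if_neg hk]
          rw [Finset.sum_congr rfl fun (l : Fin n) (_ : l ∈ univ) =>
            if_pos ((valid_iff m n hm hn l p.2).mpr fun hc => hk hc.1), Fin.sum_const,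
            nsmul_eq_mul]
      rw [Finset.sum_add_distrib, Finset.sum_add_distrib, Fin.sum_const, Fin.sum_const,
        nsmul_eq_mul, nsmul_eq_mul, Finset.sum_neg_distrib, hDsum]
      have hT : (∑ j' : Fin n, y1 j' p.2) = Y p.2 - (n:ℝ) * yhat1a p.2 := by
        simp only [hy1, Finset.sum_sub_distrib, Finset.sum_const, Finset.card_univ,
          Fintype.card_fin, nsmul_eq_mul, hYdef]
      have hS1 : (∑ i, y1 p.1 i) = (∑ i, yhat1 p.1 i) - ∑ a, yhat1a a := by
        simp only [hy1, Finset.sum_sub_distrib]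
      have hA3 : (∑ x, y2 p.1 x) = (1/(m:ℝ)) * (∑ i, R2 p.1 i) -
          ((∑ i, yhat1 p.1 i) - ∑ a, yhat1a a) := by
        simp only [hy2]
        rw [← Finset.mul_sum, Finset.sum_sub_distrib, Finset.sum_const, Finset.card_univ,
          Fintype.card_fin, nsmul_eq_mul, hS1]
        field_simp
      rw [hT, hA3, hSj p.1, hSA, hy1 p.1 p.2, hya p.2, hz p.2, hd p.2,
        hyhat1 p.1 p.2, hRt3 p.2]
      by_cases hk : (p.2:ℕ) = m-1
      · rw [if_pos hk, if_neg (show ¬ (p.2:ℕ) < m-1 by omega)]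
        field_simp
        ring
      · have hklt : (p.2:ℕ) < m-1 := by have := p.2.2; omega
        rw [if_neg hk, if_pos hklt]
        field_simp
        ring
  | inr r =>
    cases r with
    | inl p =>
        show _ = R2 p.1 p.2
        simp [Amat, Matrix.mulVec, dotProduct, Fintype.sum_sum_type,
          Fintype.sum_prod_type, ite_and]
        rw [Finset.sum_add_distrib, Finset.sum_const, Finset.card_univ, Fintype.card_fin,
          nsmul_eq_mul, hy2]
        field_simp
        ring
    | inr x =>
        show _ = R3 x
        simp [Amat, Matrix.mulVec, dotProduct, Fintype.sum_sum_type,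
          Fintype.sum_prod_type, ite_and]
        have hx : (x:ℕ) = ((rowIdx m n hm x).2:ℕ) + m * ((rowIdx m n hm x).1:ℕ) :=
          (rowIdx_eq_iff m n hm x _ _).mp ⟨rfl, rfl⟩
        have hlt : ((rowIdx m n hm x).2:ℕ) + m * ((rowIdx m n hm x).1:ℕ) < n*m-1 :=
          hx ▸ x.2
        simp only [dif_pos hlt,
          show (⟨((rowIdx m n hm x).2:ℕ) + m * ((rowIdx m n hm x).1:ℕ), hlt⟩ : Fin (n*m-1)) = x
            from Fin.ext hx.symm]
        rw [Finset.sum_add_distrib, Finset.sum_neg_distrib, Fin.sum_const, nsmul_eq_mul, hy3 x]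
        field_simp
        ring
end
end
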